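/- arXiv:2309.01208 — 13 statements merged into one kernel-verified Lean document; each statement's English description precedes it below -/
import Mathlib

section
/- Let n be a positive multiple of 5 and let m ≥ n. For all strictly increasing sequences x, y ∈ {1, …, m}^n (i.e., x_1 < x_2 < ⋯ < x_n and y_1 < y_2 < ⋯ < y_n) and every set S ⊆ {1, …, n} with |S| = n/5 such that x|_S ≠ y|_S, there exists a sequence z ∈ {0, 1, …, m+1}^n such that lis(f_S(x, z)) ≠ lis(f_S(y, z)). -/
/-- `lis x` is the maximum cardinality of an increasing subsequence of the
finite sequence `x`, i.e. of a set `T` of positions such that `x` is strictly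
increasing along `T`. -/
def lis {N : ℕ} (x : Fin N → ℕ) : ℕ :=
  Finset.sup (Finset.univ.filter fun T : Finset (Fin N) =>
    ∀ i ∈ T, ∀ j ∈ T, i < j → x i < x j) Finset.card

/-!
Say `x i₀ < y i₀` with `i₀ ∈ S`. Since `|S| = n/5`, on one side of `i₀` the positions outside
`S` outnumber those in `S` by at least two. If that side is the left, fill `|S ∩ [1, i₀)| + 2` of
the free positions there increasingly with the values `{0} ∪ x(S ∩ [1, i₀])` and put `z = 0`
elsewhere: `f_S(x, z)` then takes at most `|S| + 1` values, so `lis ≤ |S| + 1`, while in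
`f_S(y, z)` these free positions followed by `S ∩ [i₀, n]` form an increasing subsequence of
length `|S| + 2`. On the right, do the mirror construction with the values
`{m + 1} ∪ y(S ∩ [i₀, n])`.
-/

open Finset

section Lis

variable {N : ℕ}

theorem le_lis_of_strictMonoOn {g : Fin N → ℕ} {T : Finset (Fin N)}
    (hT : StrictMonoOn g T) : T.card ≤ lis g :=
  le_sup (f := Finset.card) (mem_filter.2 ⟨mem_univ T, fun _ hi _ hj hij => hT hi hj hij⟩)

theorem lis_le_card_of_forall_mem {g : Fin N → ℕ} {V : Finset ℕ} (hV : ∀ i, g i ∈ V) :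
    lis g ≤ V.card := by
  refine Finset.sup_le fun T hT => ?_
  have hmono : StrictMonoOn g T := fun i hi j hj hij => (mem_filter.1 hT).2 i hi j hj hij
  calc T.card = (T.image g).card := (card_image_of_injOn hmono.injOn).symm
    _ ≤ V.card := card_le_card fun v hv => by
      obtain ⟨i, -, rfl⟩ := mem_image.1 hv
      exact hV i

theorem card_add_card_le_lis {g : Fin N → ℕ} {A B : Finset (Fin N)}
    (hA : StrictMonoOn g A) (hB : StrictMonoOn g B)
    (hAB : ∀ a ∈ A, ∀ b ∈ B, a < b ∧ g a < g b) : A.card + B.card ≤ lis g := by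
  have hdisj : Disjoint A B :=
    disjoint_left.2 fun a ha hb => (hAB a ha a hb).1.false
  rw [← card_union_of_disjoint hdisj]
  refine le_lis_of_strictMonoOn fun i hi j hj hij => ?_
  rcases mem_union.1 hi with hi | hi <;> rcases mem_union.1 hj with hj | hj
  · exact hA hi hj hij
  · exact (hAB i hi j hj).2
  · exact absurd hij (hAB j hj i hi).1.asymm
  · exact hB hi hj hij

theorem lis_piecewise_le {S : Finset (Fin N)} {x z : Fin N → ℕ} {c : ℕ}
    (hz : ∀ i, z i ∈ insert c (S.image x)) : lis (S.piecewise x z) ≤ S.card + 1 := by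
  classical
  calc lis (S.piecewise x z) ≤ (insert c (S.image x)).card :=
        lis_le_card_of_forall_mem fun i => by
          by_cases hi : i ∈ S
          · simpa [hi] using Or.inr ⟨i, hi, rfl⟩
          · simpa [hi] using hz i
    _ ≤ S.card + 1 := (card_insert_le _ _).trans (Nat.succ_le_succ card_image_le)

end Lis

theorem Finset.exists_strictMonoOn_forall_mem {ι α : Type*} [LinearOrder ι] [LinearOrder α]
    {Q : Finset ι} {V : Finset α} (hcard : Q.card = V.card) (hV : V.Nonempty) :
    ∃ z : ι → α, (∀ i, z i ∈ V) ∧ StrictMonoOn z Q := by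
  classical
  let e := (Q.orderIsoOfFin hcard).symm
  refine ⟨fun i => if h : i ∈ Q then V.orderEmbOfFin rfl (e ⟨i, h⟩) else hV.choose,
    fun i => ?_, fun i hi j hj hij => ?_⟩
  · dsimp only
    split_ifs
    exacts [orderEmbOfFin_mem _ _ _, hV.choose_spec]
  · simp only [dif_pos (show i ∈ Q from hi), dif_pos (show j ∈ Q from hj)]
    exact (V.orderEmbOfFin rfl).strictMono (e.strictMono hij)

section Split

variable {n : ℕ} {S : Finset (Fin n)} {i : Fin n}

theorem card_Iio_inter_add_card_Ici_inter : (Iio i ∩ S).card + (Ici i ∩ S).card = S.card := by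
  have hdisj : Disjoint (Iio i ∩ S) (Ici i ∩ S) := disjoint_left.2 fun j hj hj' =>
    not_le.2 (mem_Iio.1 (mem_inter.1 hj).1) (mem_Ici.1 (mem_inter.1 hj').1)
  rw [← card_union_of_disjoint hdisj, ← union_inter_distrib_right]
  congr 1
  ext j
  simpa using fun _ => lt_or_ge j i

theorem card_Iic_inter_of_mem (hi : i ∈ S) : (Iic i ∩ S).card = (Iio i ∩ S).card + 1 := by
  rw [← Iio_insert, insert_inter_of_mem hi, card_insert_of_notMem (by simp)]

theorem card_Ici_inter_of_mem (hi : i ∈ S) : (Ici i ∩ S).card = (Ioi i ∩ S).card + 1 := by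
  rw [← Ioi_insert, insert_inter_of_mem hi, card_insert_of_notMem (by simp)]

theorem card_inter_add_two_le_card_sdiff_Iio_or_Ioi (hi : i ∈ S) (hS : 2 * S.card + 2 ≤ n) :
    (Iio i ∩ S).card + 2 ≤ (Iio i \ S).card ∨ (Ioi i ∩ S).card + 2 ≤ (Ioi i \ S).card := by
  have hlt := card_sdiff_add_card_inter (Iio i) S
  have hgt := card_sdiff_add_card_inter (Ioi i) S
  rw [Fin.card_Iio] at hlt
  rw [Fin.card_Ioi] at hgt
  have := card_Iio_inter_add_card_Ici_inter (i := i) (S := S)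
  have := card_Ici_inter_of_mem hi
  have := i.isLt
  omega

end Split

section Construction

variable {n : ℕ} {x y : Fin n → ℕ} {S : Finset (Fin n)} {i₀ : Fin n}

theorem exists_lis_piecewise_lt_of_room_before (hx : StrictMono x) (hy : StrictMono y)
    (hx₀ : ∀ i ∈ S, 0 < x i) (hi₀ : i₀ ∈ S) (hlt : x i₀ < y i₀)
    (hroom : (Iio i₀ ∩ S).card + 2 ≤ (Iio i₀ \ S).card) :
    ∃ z : Fin n → ℕ, (∀ i, z i ≤ x i₀) ∧ lis (S.piecewise x z) < lis (S.piecewise y z) := by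
  classical
  set V := insert 0 ((Iic i₀ ∩ S).image x)
  have hVcard : V.card = (Iio i₀ ∩ S).card + 2 := by
    rw [card_insert_of_notMem, card_image_of_injective _ hx.injective, card_Iic_inter_of_mem hi₀]
    intro h0
    obtain ⟨j, hj, hj0⟩ := mem_image.1 h0
    exact (hx₀ j (mem_inter.1 hj).2).ne' hj0
  have hVle : ∀ v ∈ V, v ≤ x i₀ := by
    simp only [V, mem_insert, mem_image, mem_inter, mem_Iic]
    rintro v (rfl | ⟨j, ⟨hj, -⟩, rfl⟩)
    exacts [Nat.zero_le _, hx.monotone hj]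
  obtain ⟨Q, hQ, hQcard⟩ := exists_subset_card_eq (hVcard ▸ hroom)
  obtain ⟨z, hzV, hzmono⟩ := exists_strictMonoOn_forall_mem hQcard (insert_nonempty _ _)
  have hQS : ∀ q ∈ Q, q < i₀ ∧ q ∉ S := fun q hq => by simpa using hQ hq
  refine ⟨z, fun i => hVle _ (hzV i), ?_⟩
  have hupper : lis (S.piecewise x z) ≤ S.card + 1 := lis_piecewise_le fun i =>
    insert_subset_insert _ (image_subset_image inter_subset_right) (hzV i)
  have hlower : Q.card + (Ici i₀ ∩ S).card ≤ lis (S.piecewise y z) := by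
    refine card_add_card_le_lis (fun p hp q hq hpq => ?_) (fun p hp q hq hpq => ?_)
      fun p hp q hq => ?_
    · simpa [(hQS p hp).2, (hQS q hq).2] using hzmono hp hq hpq
    · simp only [coe_inter, Set.mem_inter_iff, mem_coe] at hp hq
      simpa [hp.2, hq.2] using hy hpq
    · have hq' := mem_inter.1 hq
      have hpq : p < q := (hQS p hp).1.trans_le (mem_Ici.1 hq'.1)
      refine ⟨hpq, ?_⟩
      simp only [piecewise_eq_of_notMem _ _ _ (hQS p hp).2, piecewise_eq_of_mem _ _ _ hq'.2]
      exact ((hVle _ (hzV p)).trans_lt hlt).trans_le (hy.monotone (mem_Ici.1 hq'.1))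
  have := card_Iio_inter_add_card_Ici_inter (i := i₀) (S := S)
  omega

theorem exists_lis_piecewise_lt_of_room_after (hx : StrictMono x) (hy : StrictMono y) {c : ℕ}
    (hyc : ∀ i ∈ S, y i < c) (hi₀ : i₀ ∈ S) (hlt : x i₀ < y i₀)
    (hroom : (Ioi i₀ ∩ S).card + 2 ≤ (Ioi i₀ \ S).card) :
    ∃ z : Fin n → ℕ, (∀ i, z i ≤ c) ∧ lis (S.piecewise y z) < lis (S.piecewise x z) := by
  classical
  set V := insert c ((Ici i₀ ∩ S).image y)
  have hVcard : V.card = (Ioi i₀ ∩ S).card + 2 := by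
    rw [card_insert_of_notMem, card_image_of_injective _ hy.injective, card_Ici_inter_of_mem hi₀]
    intro hc
    obtain ⟨j, hj, hjc⟩ := mem_image.1 hc
    exact (hyc j (mem_inter.1 hj).2).ne hjc
  have hVge : ∀ v ∈ V, y i₀ ≤ v ∧ v ≤ c := by
    simp only [V, mem_insert, mem_image, mem_inter, mem_Ici]
    rintro v (rfl | ⟨j, ⟨hj, hjS⟩, rfl⟩)
    exacts [⟨(hyc i₀ hi₀).le, le_rfl⟩, ⟨hy.monotone hj, (hyc j hjS).le⟩]
  obtain ⟨Q, hQ, hQcard⟩ := exists_subset_card_eq (hVcard ▸ hroom)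
  obtain ⟨z, hzV, hzmono⟩ := exists_strictMonoOn_forall_mem hQcard (insert_nonempty _ _)
  have hQS : ∀ q ∈ Q, i₀ < q ∧ q ∉ S := fun q hq => by simpa using hQ hq
  refine ⟨z, fun i => (hVge _ (hzV i)).2, ?_⟩
  have hupper : lis (S.piecewise y z) ≤ S.card + 1 := lis_piecewise_le fun i =>
    insert_subset_insert _ (image_subset_image inter_subset_right) (hzV i)
  have hlower : (Iic i₀ ∩ S).card + Q.card ≤ lis (S.piecewise x z) := by
    refine card_add_card_le_lis (fun p hp q hq hpq => ?_) (fun p hp q hq hpq => ?_)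
      fun p hp q hq => ?_
    · simp only [coe_inter, Set.mem_inter_iff, mem_coe] at hp hq
      simpa [hp.2, hq.2] using hx hpq
    · simpa [(hQS p hp).2, (hQS q hq).2] using hzmono hp hq hpq
    · have hp' := mem_inter.1 hp
      have hpq : p < q := (mem_Iic.1 hp'.1).trans_lt (hQS q hq).1
      refine ⟨hpq, ?_⟩
      simp only [piecewise_eq_of_mem _ _ _ hp'.2, piecewise_eq_of_notMem _ _ _ (hQS q hq).2]
      exact ((hx.monotone (mem_Iic.1 hp'.1)).trans_lt hlt).trans_le (hVge _ (hzV q)).1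
  have := card_Iio_inter_add_card_Ici_inter (i := i₀) (S := S)
  have := card_Iic_inter_of_mem hi₀
  have := card_Ici_inter_of_mem hi₀
  omega

end Construction

theorem stmt0_general (n m : ℕ)
    (x y : Fin n → ℕ) (hx : StrictMono x) (hy : StrictMono y)
    (hxr : ∀ i, 1 ≤ x i ∧ x i ≤ m) (hyr : ∀ i, 1 ≤ y i ∧ y i ≤ m)
    (S : Finset (Fin n)) (hS : S.card = n / 5)
    (hne : ∃ i ∈ S, x i ≠ y i) :
    ∃ z : Fin n → ℕ, (∀ i, z i ≤ m + 1) ∧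
      lis (fun i => if i ∈ S then x i else z i) ≠
      lis (fun i => if i ∈ S then y i else z i) := by
  obtain ⟨i₀, hi₀, hxy⟩ := hne
  wlog hlt : x i₀ < y i₀ generalizing x y
  · obtain ⟨z, hz, hlis⟩ := this y x hy hx hyr hxr hxy.symm (hxy.symm.lt_of_le (not_lt.1 hlt))
    exact ⟨z, hz, hlis.symm⟩
  have hS₂ : 2 * S.card + 2 ≤ n := by
    have := card_pos.2 ⟨i₀, hi₀⟩
    omega
  rcases card_inter_add_two_le_card_sdiff_Iio_or_Ioi hi₀ hS₂ with hroom | hroom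
  · obtain ⟨z, hz, hlis⟩ :=
      exists_lis_piecewise_lt_of_room_before hx hy (fun i _ => (hxr i).1) hi₀ hlt hroom
    exact ⟨z, fun i => (hz i).trans ((hxr i₀).2.trans m.le_succ), hlis.ne⟩
  · obtain ⟨z, hz, hlis⟩ := exists_lis_piecewise_lt_of_room_after hx hy
      (fun i _ => Nat.lt_succ_of_le (hyr i).2) hi₀ hlt hroom
    exact ⟨z, hz, hlis.ne'⟩

/-- Claim 3.2: for strictly increasing `x, y ∈ {1,…,m}^n` (with `5 ∣ n`, `n ≤ m`)
and any `S ⊆ [n]` with `|S| = n/5` on which `x` and `y` differ, there is a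
sequence `z ∈ {0,…,m+1}^n` with `lis (f_S(x,z)) ≠ lis (f_S(y,z))`. -/
theorem stmt0 (n m : ℕ) (hn : 0 < n) (h5 : 5 ∣ n) (hm : n ≤ m)
    (x y : Fin n → ℕ) (hx : StrictMono x) (hy : StrictMono y)
    (hxr : ∀ i, 1 ≤ x i ∧ x i ≤ m) (hyr : ∀ i, 1 ≤ y i ∧ y i ≤ m)
    (S : Finset (Fin n)) (hS : S.card = n / 5)
    (hne : ∃ i ∈ S, x i ≠ y i) :
    ∃ z : Fin n → ℕ, (∀ i, z i ≤ m + 1) ∧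
      lis (fun i => if i ∈ S then x i else z i) ≠
      lis (fun i => if i ∈ S then y i else z i) :=
  stmt0_general n m x y hx hy hxr hyr S hS hne
end

section
/- There exists a constant c > 0 such that for every positive multiple n of 20 and every m ≥ c·n, there exists a family T of strictly increasing sequences in {1, …, m}^n with |T| ≥ 2^{n/20} such that for every set S ⊆ {1, …, n} with |S| = n/5 and all distinct x, y ∈ T, one has x|_S ≠ y|_S. -/
/-!
Cut the `n` positions into `n / 20` blocks of length `20`. The greedy (Gilbert–Varshamov)
argument gives a code of length `n / 20` over an alphabet of size `2 ^ 10` with at least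
`2 ^ (n / 20)` words and pairwise Hamming distance more than `4/5` of its length. A codeword
`f` becomes the increasing sequence whose entry at offset `k` of block `j` is
`20 (1024 j + f j) + k + 1 ≤ 1024 n`. Two such sequences agree exactly on the blocks where the
codewords agree, hence on fewer than `n / 5` positions, so they differ on every `n / 5`-set.
-/

open Finset Function

section HammingCode

theorem hammingDist_le_card_compl {ι α : Type*} [Fintype ι] [DecidableEq ι] [DecidableEq α]
    {x y : ι → α} {S : Finset ι} (h : ∀ i ∈ S, x i = y i) :
    hammingDist x y ≤ #Sᶜ :=
  card_le_card fun i hi => mem_compl.2 fun hiS => (mem_filter.1 hi).2 (h i hiS)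

variable {ι α : Type*} [Fintype ι] [DecidableEq ι] [Fintype α] [DecidableEq α]

theorem card_hammingBall_le [Nonempty α] (c : ι → α) (r : ℕ) :
    #{z | hammingDist z c ≤ r} ≤ 2 ^ Fintype.card ι * Fintype.card α ^ r := by
  set 𝒟 : Finset (Finset ι) := {D ∈ univ.powerset | #D ≤ r}
  -- `z` is pinned down by the set `D` where it differs from `c` and by its values on `D`
  let agreeOff (D : Finset ι) := Fintype.piFinset fun i => if i ∈ D then univ else {c i}
  have hcover : ({z | hammingDist z c ≤ r} : Finset (ι → α)) ⊆ 𝒟.biUnion agreeOff := by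
    intro z hz
    refine mem_biUnion.2 ⟨({i | z i ≠ c i} : Finset ι),
      mem_filter.2 ⟨mem_powerset.2 (subset_univ _), (mem_filter.1 hz).2⟩,
      Fintype.mem_piFinset.2 fun i => ?_⟩
    by_cases hi : z i = c i <;> simp [hi]
  have hagreeOff : ∀ D ∈ 𝒟, #(agreeOff D) ≤ Fintype.card α ^ r := by
    intro D hD
    rw [Fintype.card_piFinset]
    simp only [apply_ite card, card_univ, card_singleton, Fintype.prod_ite_mem, prod_const]
    exact Nat.pow_le_pow_right Fintype.card_pos (mem_filter.1 hD).2
  calc #{z | hammingDist z c ≤ r}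
      ≤ ∑ D ∈ 𝒟, #(agreeOff D) := (card_le_card hcover).trans card_biUnion_le
    _ ≤ #𝒟 * Fintype.card α ^ r := by
      simpa only [sum_const, smul_eq_mul] using sum_le_sum hagreeOff
    _ ≤ 2 ^ Fintype.card ι * Fintype.card α ^ r := by
      gcongr
      exact (card_filter_le _ _).trans_eq (by rw [card_powerset, card_univ])

theorem exists_hammingDist_separated_covering (r : ℕ) :
    ∃ C : Finset (ι → α), (C : Set (ι → α)).Pairwise (fun f g => r < hammingDist f g) ∧
      ∀ z, ∃ c ∈ C, hammingDist z c ≤ r := by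
  classical
  obtain ⟨C, hCmax⟩ := exists_maximal
    (s := {C : Finset (ι → α) | (C : Set (ι → α)).Pairwise (fun f g => r < hammingDist f g)})
    ⟨∅, by simp⟩
  have hC := (mem_filter.1 hCmax.1).2
  refine ⟨C, hC, fun z => ?_⟩
  by_contra! hfar
  have hins : ((insert z C : Finset (ι → α)) : Set (ι → α)).Pairwise
      (fun f g => r < hammingDist f g) := by
    rw [coe_insert, Set.pairwise_insert]
    exact ⟨hC, fun c hc _ => ⟨hfar c hc, hammingDist_comm c z ▸ hfar c hc⟩⟩
  have hzC : z ∈ C :=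
    hCmax.2 (mem_filter.2 ⟨mem_univ _, hins⟩) (subset_insert z C) (mem_insert_self z C)
  simpa using hfar z hzC

theorem exists_hammingCode_card [Nonempty α] (r : ℕ) :
    ∃ C : Finset (ι → α), (C : Set (ι → α)).Pairwise (fun f g => r < hammingDist f g) ∧
      Fintype.card α ^ Fintype.card ι ≤ #C * (2 ^ Fintype.card ι * Fintype.card α ^ r) := by
  obtain ⟨C, hsep, hcover⟩ := exists_hammingDist_separated_covering (ι := ι) (α := α) r
  refine ⟨C, hsep, ?_⟩
  calc Fintype.card α ^ Fintype.card ι = #(univ : Finset (ι → α)) := by simp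
    _ ≤ #(C.biUnion fun c => {z | hammingDist z c ≤ r}) :=
      card_le_card fun z _ => by simpa using hcover z
    _ ≤ ∑ c ∈ C, #{z | hammingDist z c ≤ r} := card_biUnion_le
    _ ≤ #C * (2 ^ Fintype.card ι * Fintype.card α ^ r) := by
      simpa only [sum_const, smul_eq_mul] using
        sum_le_sum fun (c : ι → α) _ => card_hammingBall_le c r

end HammingCode

theorem mul_add_lt_mul_add_of_lt {n a a' b b' : ℕ} (hb : b < n) (ha : a < a') :
    n * a + b < n * a' + b' :=
  calc n * a + b < n * (a + 1) := by rw [mul_add_one]; omega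
    _ ≤ n * a' + b' := (Nat.mul_le_mul_left n ha).trans (Nat.le_add_right _ _)

section BlockEncode

variable {B q L : ℕ}

/-- Position `i` in block `j` with offset `k` is sent to one plus the mixed-radix number
with digits `(j, f j, k)` in bases `(B, q, L)`. -/
def blockEncode (L : ℕ) (f : Fin B → Fin q) (i : Fin (B * L)) : ℕ :=
  L * (q * i.divNat + f i.divNat) + i.modNat + 1

theorem blockEncode_strictMono (f : Fin B → Fin q) : StrictMono (blockEncode L f) := by
  intro i i' hii'
  have hdiv : (i.divNat : ℕ) ≤ i'.divNat := by
    simpa only [Fin.coe_divNat] using Nat.div_le_div_right hii'.le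
  unfold blockEncode
  rcases hdiv.lt_or_eq with hlt | heq
  · have hsymbol : q * i.divNat + f i.divNat < q * i'.divNat + f i'.divNat :=
      mul_add_lt_mul_add_of_lt (f _).2 hlt
    have := mul_add_lt_mul_add_of_lt (b' := i'.modNat) i.modNat.2 hsymbol
    omega
  · have hblock : i.divNat = i'.divNat := Fin.ext heq
    have hmod : (i.modNat : ℕ) < i'.modNat := by
      have hi := Nat.div_add_mod (i : ℕ) L
      have hi' := Nat.div_add_mod (i' : ℕ) L
      simp only [Fin.coe_divNat, Fin.coe_modNat] at heq ⊢
      rw [heq] at hi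
      have : (i : ℕ) < i' := hii'
      omega
    rw [hblock]
    omega

theorem blockEncode_le (f : Fin B → Fin q) (i : Fin (B * L)) : blockEncode L f i ≤ B * q * L :=
  calc blockEncode L f i ≤ L * (q * i.divNat + f i.divNat) + L := by
        unfold blockEncode; have := i.modNat.2; omega
    _ = L * (q * i.divNat + (f i.divNat + 1)) := by ring
    _ ≤ L * (q * i.divNat + q) := by gcongr; exact (f _).2
    _ = L * q * (i.divNat + 1) := by ring
    _ ≤ L * q * B := Nat.mul_le_mul_left _ i.divNat.2
    _ = B * q * L := by ring

theorem blockEncode_eq_iff {f g : Fin B → Fin q} {i : Fin (B * L)} :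
    blockEncode L f i = blockEncode L g i ↔ f i.divNat = g i.divNat := by
  have hL : 0 < L := i.modNat.pos
  simp [blockEncode, Fin.val_inj, hL.ne']

theorem hammingDist_blockEncode (f g : Fin B → Fin q) :
    hammingDist (blockEncode L f) (blockEncode L g) = hammingDist f g * L := by
  have hfibre : hammingDist (blockEncode L f) (blockEncode L g) =
      #(({j | f j ≠ g j} : Finset (Fin B)) ×ˢ (univ : Finset (Fin L))) := by
    refine card_equiv finProdFinEquiv.symm fun i => ?_
    simp [blockEncode_eq_iff]
  rw [hfibre, card_product, card_univ, Fintype.card_fin]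
  rfl

end BlockEncode

theorem exists_code_fin_1024 (B : ℕ) :
    ∃ C : Finset (Fin B → Fin 1024),
      (C : Set (Fin B → Fin 1024)).Pairwise (fun f g => 4 * B / 5 < hammingDist f g) ∧
      2 ^ B ≤ #C := by
  obtain ⟨C, hsep, hcard⟩ := exists_hammingCode_card (ι := Fin B) (α := Fin 1024) (4 * B / 5)
  refine ⟨C, hsep, Nat.le_of_mul_le_mul_right (c := 2 ^ B * 1024 ^ (4 * B / 5)) ?_ (by positivity)⟩
  simp only [Fintype.card_fin] at hcard
  calc 2 ^ B * (2 ^ B * 1024 ^ (4 * B / 5)) = 2 ^ (2 * B + 10 * (4 * B / 5)) := by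
        rw [show (1024 : ℕ) = 2 ^ 10 by norm_num, ← pow_mul, ← pow_add, ← pow_add]; ring_nf
    _ ≤ 2 ^ (10 * B) := Nat.pow_le_pow_right (by norm_num) (by omega)
    _ = 1024 ^ B := by rw [pow_mul]; norm_num
    _ ≤ #C * (2 ^ B * 1024 ^ (4 * B / 5)) := hcard

/-- Claim 3.3: there is a constant `c > 0` such that for every positive
multiple `n` of `20` and every `m ≥ c·n`, there is a family `T` of at least
`2^(n/20)` strictly increasing sequences in `{1,…,m}^n` such that any two
distinct members of `T` differ on every index set `S` of size `n/5`. -/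
theorem stmt1 : ∃ c : ℝ, 0 < c ∧ ∀ n m : ℕ, 0 < n → 20 ∣ n → c * (n : ℝ) ≤ (m : ℝ) →
    ∃ T : Finset (Fin n → ℕ),
      (∀ x ∈ T, StrictMono x ∧ ∀ i, 1 ≤ x i ∧ x i ≤ m) ∧
      2 ^ (n / 20) ≤ T.card ∧
      ∀ S : Finset (Fin n), S.card = n / 5 →
        ∀ x ∈ T, ∀ y ∈ T, x ≠ y → ∃ i ∈ S, x i ≠ y i := by
  refine ⟨1024, by norm_num, fun n m _ h20 hm => ?_⟩
  obtain ⟨B, rfl⟩ : ∃ B, n = B * 20 := ⟨n / 20, (Nat.div_mul_cancel h20).symm⟩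
  have hm : B * 1024 * 20 ≤ m := by
    rw [← Nat.cast_le (α := ℝ)]; push_cast at hm ⊢; linarith
  obtain ⟨C, hsep, hcard⟩ := exists_code_fin_1024 B
  have hinj : Injective (blockEncode (q := 1024) (B := B) 20) := fun f g hfg => by
    simpa [hfg] using hammingDist_blockEncode (L := 20) f g
  refine ⟨C.image (blockEncode 20), ?_, ?_, ?_⟩
  · simp only [forall_mem_image]
    exact fun f _ => ⟨blockEncode_strictMono f, fun i => ⟨by simp [blockEncode],
      (blockEncode_le f i).trans hm⟩⟩
  · rwa [card_image_of_injective _ hinj, Nat.mul_div_cancel _ (by norm_num)]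
  · simp only [mem_image]
    rintro S hS _ ⟨f, hf, rfl⟩ _ ⟨g, hg, rfl⟩ hfg
    by_contra! hagree
    have hdist := hammingDist_le_card_compl hagree
    rw [hammingDist_blockEncode, card_compl, Fintype.card_fin, hS] at hdist
    have := hsep hf hg (ne_of_apply_ne _ hfg)
    omega
end

section
/- Let n be a positive multiple of 5, let m ≥ n, let z ∈ {1, …, m}^n be strictly increasing, and let S ⊆ {1, …, n} with |S| = n/5. Then the number of strictly increasing sequences x ∈ {1, …, m}^n with x|_S = z|_S is at most (n/m)^{n/5} · (5e/4)^{4n/5} · C(m, n), where e is Euler's number and C(m, n) is the binomial coefficient m choose n. -/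
/-!
An increasing sequence `x` that agrees with `z` on `S` is determined by the set `x(Sᶜ)`, an
`(n - k)`-subset of `{1, …, m} \ z(S)` where `k = |S|`; so there are at most `C(m - k, n - k)`
of them. Since `C(m - k, n - k) = C(m, n) C(n, k) / C(m, k)` and `C(n, k) / C(m, k) ≤ (n / m)^k`,
this is at most `(n / m)^k C(m, n)`, and the factor `(5e/4)^{4n/5}` is at least `1`.
-/

open Finset

theorem Nat.descFactorial_mul_pow_le_of_le {n m : ℕ} (hnm : n ≤ m) (k : ℕ) :
    n.descFactorial k * m ^ k ≤ m.descFactorial k * n ^ k := by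
  induction k with
  | zero => simp
  | succ k ih =>
    have step : (n - k) * m ≤ (m - k) * n := by
      rw [Nat.sub_mul, Nat.sub_mul, Nat.mul_comm n m]
      exact Nat.sub_le_sub_left (Nat.mul_le_mul_left k hnm) _
    rw [descFactorial_succ, descFactorial_succ, pow_succ, pow_succ]
    calc (n - k) * n.descFactorial k * (m ^ k * m)
        = (n.descFactorial k * m ^ k) * ((n - k) * m) := by ring
      _ ≤ (m.descFactorial k * n ^ k) * ((m - k) * n) := Nat.mul_le_mul ih step
      _ = (m - k) * m.descFactorial k * (n ^ k * n) := by ring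

theorem Nat.choose_mul_pow_le_of_le {n m : ℕ} (hnm : n ≤ m) (k : ℕ) :
    n.choose k * m ^ k ≤ m.choose k * n ^ k := by
  have h := Nat.descFactorial_mul_pow_le_of_le hnm k
  rw [descFactorial_eq_factorial_mul_choose, descFactorial_eq_factorial_mul_choose,
    Nat.mul_assoc, Nat.mul_assoc] at h
  exact Nat.le_of_mul_le_mul_left h k.factorial_pos

theorem Nat.choose_sub_mul_pow_le {n m k : ℕ} (hkn : k ≤ n) (hnm : n ≤ m) :
    (m - k).choose (n - k) * m ^ k ≤ m.choose n * n ^ k := by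
  have hpos : 0 < m.choose k := Nat.choose_pos (hkn.trans hnm)
  refine Nat.le_of_mul_le_mul_left ?_ hpos
  calc m.choose k * ((m - k).choose (n - k) * m ^ k)
      = m.choose n * (n.choose k * m ^ k) := by rw [← Nat.mul_assoc, ← Nat.choose_mul hkn]; ring
    _ ≤ m.choose n * (m.choose k * n ^ k) :=
      Nat.mul_le_mul_left _ (Nat.choose_mul_pow_le_of_le hnm k)
    _ = m.choose k * (m.choose n * n ^ k) := by ring

theorem ncard_strictMono_eqOn_le {α : Type*} [LinearOrder α] {n : ℕ} (s : Finset α)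
    (S : Finset (Fin n)) (z : Fin n → α) (hz : Set.InjOn z S) (hzs : ∀ i ∈ S, z i ∈ s) :
    {x : Fin n → α | StrictMono x ∧ (∀ i, x i ∈ s) ∧ ∀ i ∈ S, x i = z i}.ncard ≤
      (#s - #S).choose (n - #S) := by
  classical
  set T := s \ S.image z
  have hT : #T = #s - #S := by
    rw [card_sdiff_of_subset (image_subset_iff.2 hzs), card_image_of_injOn hz]
  have hrange : ∀ x : Fin n → α, (∀ i ∈ S, x i = z i) →
      Set.range x = z '' S ∪ (Sᶜ.image x : Set α) := by
    intro x hx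
    rw [← Set.image_univ, ← Set.union_compl_self (S : Set (Fin n)), Set.image_union,
      Set.image_congr hx, coe_image, coe_compl]
  calc _ ≤ (powersetCard (n - #S) T : Set (Finset α)).ncard := by
        refine Set.ncard_le_ncard_of_injOn (fun x => Sᶜ.image x) ?_ ?_ (Set.toFinite _)
        · rintro x ⟨hxm, hxs, hxz⟩
          refine mem_powersetCard.2 ⟨fun a ha => ?_, ?_⟩
          · obtain ⟨i, hi, rfl⟩ := mem_image.1 ha
            refine mem_sdiff.2 ⟨hxs i, fun hmem => ?_⟩
            obtain ⟨j, hj, hji⟩ := mem_image.1 hmem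
            rw [← hxz j hj] at hji
            exact mem_compl.1 hi (hxm.injective hji ▸ hj)
          · rw [card_image_of_injective _ hxm.injective, card_compl, Fintype.card_fin]
        · rintro x ⟨hxm, -, hxz⟩ y ⟨hym, -, hyz⟩ hxy
          rw [← hxm.range_inj hym, hrange x hxz, hrange y hyz]
          exact congrArg _ (congrArg _ hxy)
    _ = (#s - #S).choose (n - #S) := by
        rw [Set.ncard_coe_finset, card_powersetCard, hT]

theorem stmt3_general (n m : ℕ) (hm : n ≤ m)
    (z : Fin n → ℕ) (hz : StrictMono z) (hzr : ∀ i, 1 ≤ z i ∧ z i ≤ m)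
    (S : Finset (Fin n)) (hS : S.card = n / 5) :
    (Set.ncard {x : Fin n → ℕ | StrictMono x ∧ (∀ i, 1 ≤ x i ∧ x i ≤ m) ∧
        ∀ i ∈ S, x i = z i} : ℝ) ≤
      ((n : ℝ) / (m : ℝ)) ^ (n / 5) * (5 * Real.exp 1 / 4) ^ (4 * n / 5) *
        (Nat.choose m n : ℝ) := by
  have hkn : n / 5 ≤ n := Nat.div_le_self n 5
  have hcount := ncard_strictMono_eqOn_le (Finset.Icc 1 m) S z hz.injective.injOn
    (fun i _ => Finset.mem_Icc.2 (hzr i))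
  simp only [Finset.mem_Icc, Nat.card_Icc, add_tsub_cancel_right, hS] at hcount
  have hchoose : ((m - n / 5).choose (n - n / 5) : ℝ) * (m : ℝ) ^ (n / 5) ≤
      (m.choose n : ℝ) * (n : ℝ) ^ (n / 5) := by
    exact_mod_cast Nat.choose_sub_mul_pow_le hkn hm
  have hmk : (0 : ℝ) < (m : ℝ) ^ (n / 5) := by
    rcases (n / 5).eq_zero_or_pos with h | h
    · simp [h]
    · exact pow_pos (by exact_mod_cast h.trans_le (hkn.trans hm)) _
  have he : (1 : ℝ) ≤ (5 * Real.exp 1 / 4) ^ (4 * n / 5) :=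
    one_le_pow₀ (by linarith [Real.add_one_le_exp 1])
  calc _ ≤ ((m - n / 5).choose (n - n / 5) : ℝ) := by exact_mod_cast hcount
    _ ≤ ((n : ℝ) / (m : ℝ)) ^ (n / 5) * (m.choose n : ℝ) := by
        rw [div_pow, div_mul_eq_mul_div, le_div_iff₀ hmk]
        linarith
    _ ≤ _ := by
        gcongr
        exact le_mul_of_one_le_right (by positivity) he

/-- Key estimate in the proof of Claim 3.3: for `5 ∣ n`, `n ≤ m` and a strictly
increasing `z ∈ {1,…,m}^n`, the number of strictly increasing sequences
`x ∈ {1,…,m}^n` agreeing with `z` on a set `S` of size `n/5` is at most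
`(n/m)^{n/5} · (5e/4)^{4n/5} · C(m,n)`. -/
theorem stmt3 (n m : ℕ) (hn : 0 < n) (h5 : 5 ∣ n) (hm : n ≤ m)
    (z : Fin n → ℕ) (hz : StrictMono z) (hzr : ∀ i, 1 ≤ z i ∧ z i ≤ m)
    (S : Finset (Fin n)) (hS : S.card = n / 5) :
    (Set.ncard {x : Fin n → ℕ | StrictMono x ∧ (∀ i, 1 ≤ x i ∧ x i ≤ m) ∧
        ∀ i ∈ S, x i = z i} : ℝ) ≤
      ((n : ℝ) / (m : ℝ)) ^ (n / 5) * (5 * Real.exp 1 / 4) ^ (4 * n / 5) *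
        (Nat.choose m n : ℝ) :=
  stmt3_general n m hm z hz hzr S hS
end

section
/- Let n be a positive multiple of 5 and let m ≥ n. The number of ordered pairs (x, y) of strictly increasing sequences in {1, …, m}^n for which there exists a set S ⊆ {1, …, n} with |S| = n/5 and x|_S = y|_S is at most (5e · (n/m) · (5e/4)^4)^{n/5} · C(m, n)^2, where e is Euler's number and C(m, n) is the binomial coefficient m choose n. -/
/-!
Union bound over the `C(n, k)` index sets `S`, `k = n/5`. For fixed `S`, a pair `(x, y)` is
determined by the image of `x` and by `y(Sᶜ)`, since the image of `y` is `x(S) ∪ y(Sᶜ)`; hence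
there are at most `C(m, n) C(m, n - k)` such pairs. Then
`C(m, n - k) ≤ (n/m)^k C(n, k) C(m, n)`, `C(n, k)^2 ≤ 4^n = (4^5)^k` and `4^5 ≤ 5e (5e/4)^4`.
-/

open Finset Real

section IncreasingSequences

variable {α : Type*} {n : ℕ}

lemma image_univ_eq_image_union_image_compl [DecidableEq α] {x y : Fin n → α}
    {S : Finset (Fin n)} (h : ∀ i ∈ S, x i = y i) : univ.image y = S.image x ∪ Sᶜ.image y := by
  rw [← union_compl S, image_union, image_congr fun i hi => h i hi]

variable [LinearOrder α]

lemma StrictMono.eq_of_image_univ_eq {x y : Fin n → α} (hx : StrictMono x) (hy : StrictMono y)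
    (h : univ.image x = univ.image y) : x = y := by
  rw [← hx.range_inj hy, ← Set.image_univ, ← Set.image_univ, ← coe_univ, ← coe_image,
    ← coe_image, h]

lemma image_mem_powersetCard {x : Fin n → α} (hx : StrictMono x) {s : Finset α}
    (hxs : ∀ i, x i ∈ s) (S : Finset (Fin n)) : S.image x ∈ s.powersetCard #S := by
  rw [mem_powersetCard, card_image_of_injective _ hx.injective]
  exact ⟨fun a ha => by obtain ⟨i, -, rfl⟩ := mem_image.1 ha; exact hxs i, rfl⟩

def increasingPairsAgreeingOn (s : Finset α) (S : Finset (Fin n)) :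
    Set ((Fin n → α) × (Fin n → α)) :=
  {xy | (StrictMono xy.1 ∧ ∀ i, xy.1 i ∈ s) ∧ (StrictMono xy.2 ∧ ∀ i, xy.2 i ∈ s) ∧
    ∀ i ∈ S, xy.1 i = xy.2 i}

lemma ncard_increasingPairsAgreeingOn_le (s : Finset α) (S : Finset (Fin n)) :
    (increasingPairsAgreeingOn s S).ncard ≤ (#s).choose n * (#s).choose (n - #S) := by
  have hcard : #(s.powersetCard n ×ˢ s.powersetCard (n - #S)) =
      (#s).choose n * (#s).choose (n - #S) := by
    rw [card_product, card_powersetCard, card_powersetCard]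
  rw [← hcard, ← Set.ncard_coe_finset]
  refine Set.ncard_le_ncard_of_injOn (fun xy => (univ.image xy.1, Sᶜ.image xy.2)) ?_ ?_
    (finite_toSet _)
  · rintro xy ⟨⟨hx, hxs⟩, ⟨hy, hys⟩, -⟩
    have h1 := image_mem_powersetCard hx hxs univ
    have h2 := image_mem_powersetCard hy hys Sᶜ
    rw [card_univ, Fintype.card_fin] at h1
    rw [card_compl, Fintype.card_fin] at h2
    exact mem_product.2 ⟨h1, h2⟩
  · rintro ⟨x, y⟩ ⟨⟨hx, -⟩, ⟨hy, -⟩, hxy⟩ ⟨x', y'⟩ ⟨⟨hx', -⟩, ⟨hy', -⟩, hxy'⟩ h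
    simp only [Prod.mk.injEq] at h
    obtain rfl := hx.eq_of_image_univ_eq hx' h.1
    refine Prod.ext rfl (hy.eq_of_image_univ_eq hy' ?_)
    rw [image_univ_eq_image_union_image_compl hxy, image_univ_eq_image_union_image_compl hxy',
      h.2]

lemma ncard_increasingPairs_agreeing_le (s : Finset α) (k : ℕ) :
    {xy : (Fin n → α) × (Fin n → α) |
        (StrictMono xy.1 ∧ ∀ i, xy.1 i ∈ s) ∧ (StrictMono xy.2 ∧ ∀ i, xy.2 i ∈ s) ∧
        ∃ S : Finset (Fin n), #S = k ∧ ∀ i ∈ S, xy.1 i = xy.2 i}.ncard ≤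
      n.choose k * ((#s).choose n * (#s).choose (n - k)) := by
  calc _ = (⋃ S ∈ univ.powersetCard k, increasingPairsAgreeingOn s S).ncard := by
        congr 1
        ext xy
        simp only [Set.mem_ofPred_eq, Set.mem_iUnion, mem_powersetCard, subset_univ, true_and,
          increasingPairsAgreeingOn, exists_prop]
        tauto
    _ ≤ ∑ S ∈ univ.powersetCard k, (increasingPairsAgreeingOn s S).ncard :=
        set_ncard_biUnion_le _ _
    _ ≤ ∑ _S ∈ univ.powersetCard k, (#s).choose n * (#s).choose (n - k) := by
        refine sum_le_sum fun S hS => ?_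
        rw [← (mem_powersetCard.1 hS).2]
        exact ncard_increasingPairsAgreeingOn_le s S
    _ = n.choose k * ((#s).choose n * (#s).choose (n - k)) := by
        rw [sum_const, card_powersetCard, card_univ, Fintype.card_fin, smul_eq_mul]

end IncreasingSequences

lemma Nat.pow_le_pow_mul_choose_add {n d k : ℕ} (hkn : k ≤ n) :
    (n + d) ^ k ≤ n ^ k * (d + k).choose k := by
  induction k with
  | zero => simp
  | succ k ih =>
    refine Nat.le_of_mul_le_mul_right ?_ k.succ_pos
    have hstep : (n + d) * (k + 1) ≤ n * (d + k + 1) := by nlinarith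
    calc (n + d) ^ (k + 1) * (k + 1) = (n + d) ^ k * ((n + d) * (k + 1)) := by ring
      _ ≤ n ^ k * (d + k).choose k * (n * (d + k + 1)) :=
        Nat.mul_le_mul (ih (by omega)) hstep
      _ = n ^ (k + 1) * ((d + k + 1) * (d + k).choose k) := by ring
      _ = n ^ (k + 1) * (d + (k + 1)).choose (k + 1) * (k + 1) := by
        rw [← add_assoc, mul_assoc, ← Nat.add_one_mul_choose_eq]

lemma Nat.pow_mul_choose_sub_le {k n m : ℕ} (hkn : k ≤ n) (hnm : n ≤ m) :
    m ^ k * m.choose (n - k) ≤ n ^ k * n.choose k * m.choose n := by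
  obtain ⟨d, rfl⟩ := Nat.exists_eq_add_of_le hnm
  have hmul : (n + d).choose n * n.choose k = (n + d).choose (n - k) * (d + k).choose k := by
    rw [← Nat.choose_symm hkn, Nat.choose_mul (Nat.sub_le n k)]
    congr 2 <;> omega
  refine Nat.le_of_mul_le_mul_right ?_ (Nat.choose_pos (Nat.le_add_left k d))
  calc (n + d) ^ k * (n + d).choose (n - k) * (d + k).choose k
      = (n + d) ^ k * ((n + d).choose n * n.choose k) := by rw [hmul]; ring
    _ ≤ n ^ k * (d + k).choose k * ((n + d).choose n * n.choose k) :=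
      Nat.mul_le_mul_right _ (Nat.pow_le_pow_mul_choose_add hkn)
    _ = n ^ k * n.choose k * (n + d).choose n * (d + k).choose k := by ring

lemma Nat.cast_choose_sub_le {k n m : ℕ} (hkn : k ≤ n) (hnm : n ≤ m) :
    (m.choose (n - k) : ℝ) ≤ ((n : ℝ) / m) ^ k * n.choose k * m.choose n := by
  rcases Nat.eq_zero_or_pos m with rfl | hm
  · obtain rfl : n = 0 := by omega
    obtain rfl : k = 0 := by omega
    simp
  rw [div_pow, div_mul_eq_mul_div, div_mul_eq_mul_div, le_div_iff₀ (by positivity), mul_comm]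
  exact_mod_cast Nat.pow_mul_choose_sub_le hkn hnm

lemma Nat.choose_sq_le_four_pow (n k : ℕ) : n.choose k ^ 2 ≤ 4 ^ n :=
  calc n.choose k ^ 2 ≤ (2 ^ n) ^ 2 := Nat.pow_le_pow_left (Nat.choose_le_two_pow n k) 2
    _ = 4 ^ n := by rw [← pow_mul, mul_comm, pow_mul]; norm_num

lemma four_pow_five_le_five_exp_one_mul : (4 : ℝ) ^ 5 ≤ 5 * exp 1 * (5 * exp 1 / 4) ^ 4 := by
  have he : (2.7 : ℝ) ≤ exp 1 := exp_one_gt_d9.le.trans' (by norm_num)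
  have he5 : (2.7 : ℝ) ^ 5 ≤ exp 1 ^ 5 := pow_le_pow_left₀ (by norm_num) he 5
  nlinarith

theorem stmt4_general (n m : ℕ) (h5 : 5 ∣ n) (hm : n ≤ m) :
    (Set.ncard {xy : (Fin n → ℕ) × (Fin n → ℕ) |
        (StrictMono xy.1 ∧ ∀ i, 1 ≤ xy.1 i ∧ xy.1 i ≤ m) ∧
        (StrictMono xy.2 ∧ ∀ i, 1 ≤ xy.2 i ∧ xy.2 i ≤ m) ∧
        ∃ S : Finset (Fin n), S.card = n / 5 ∧ ∀ i ∈ S, xy.1 i = xy.2 i} : ℝ) ≤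
      (5 * Real.exp 1 * ((n : ℝ) / (m : ℝ)) * (5 * Real.exp 1 / 4) ^ 4) ^ (n / 5) *
        (Nat.choose m n : ℝ) ^ 2 := by
  obtain ⟨k, rfl⟩ := h5
  have hcount := ncard_increasingPairs_agreeing_le (n := 5 * k) (Icc 1 m) k
  simp only [mem_Icc, Nat.card_Icc, add_tsub_cancel_right] at hcount
  have hchoose : ((5 * k).choose k : ℝ) ^ 2 ≤ (4 ^ 5) ^ k := by
    rw [← pow_mul]; exact_mod_cast Nat.choose_sq_le_four_pow _ _
  rw [Nat.mul_div_cancel_left k (by norm_num : 0 < 5)]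
  calc _ ≤ ((5 * k).choose k : ℝ) * m.choose (5 * k) * m.choose (5 * k - k) := by
        rw [mul_assoc]; exact_mod_cast hcount
    _ ≤ ((5 * k).choose k : ℝ) * m.choose (5 * k) *
          (((5 * k : ℕ) / m : ℝ) ^ k * (5 * k).choose k * m.choose (5 * k)) := by
        gcongr; exact Nat.cast_choose_sub_le (by omega) hm
    _ = ((5 * k).choose k : ℝ) ^ 2 * ((5 * k : ℕ) / m : ℝ) ^ k * m.choose (5 * k) ^ 2 := by ring
    _ ≤ (4 ^ 5) ^ k * ((5 * k : ℕ) / m : ℝ) ^ k * m.choose (5 * k) ^ 2 := by gcongr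
    _ ≤ _ := by
        rw [← mul_pow, mul_right_comm (5 * exp 1)]
        gcongr
        exact four_pow_five_le_five_exp_one_mul

/-- Union-bound estimate in the proof of Claim 3.3: for `5 ∣ n`, `n ≤ m`, the
number of ordered pairs `(x, y)` of strictly increasing sequences in
`{1,…,m}^n` that agree on some index set `S` of size `n/5` is at most
`(5e · (n/m) · (5e/4)^4)^{n/5} · C(m,n)^2`. -/
theorem stmt4 (n m : ℕ) (hn : 0 < n) (h5 : 5 ∣ n) (hm : n ≤ m) :
    (Set.ncard {xy : (Fin n → ℕ) × (Fin n → ℕ) |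
        (StrictMono xy.1 ∧ ∀ i, 1 ≤ xy.1 i ∧ xy.1 i ≤ m) ∧
        (StrictMono xy.2 ∧ ∀ i, 1 ≤ xy.2 i ∧ xy.2 i ≤ m) ∧
        ∃ S : Finset (Fin n), S.card = n / 5 ∧ ∀ i ∈ S, xy.1 i = xy.2 i} : ℝ) ≤
      (5 * Real.exp 1 * ((n : ℝ) / (m : ℝ)) * (5 * Real.exp 1 / 4) ^ 4) ^ (n / 5) *
        (Nat.choose m n : ℝ) ^ 2 :=
  stmt4_general n m h5 hm
end

section
/- Let n be a positive multiple of 4 and let u ∈ {0,1}^{n/4}. Then lis(z(u, u)) ≥ n/2. -/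
/-- The block of length 4 used in the type 1 order gadget: `i` is the `0`-indexed
block number (the paper's block number is `i+1`), and `a, b` are the bits `u_{i+1}`,
`v_{i+1}`. -/
def zblock (i : ℕ) (a b : Bool) : Fin 4 → ℕ :=
  match a, b with
  | false, false => ![0, 0, 2 * i + 1, 2 * i + 2]
  | true,  false => ![2 * i + 1, 0, 0, 2 * i + 2]
  | false, true  => ![0, 2 * i + 2, 2 * i + 1, 0]
  | true,  true  => ![2 * i + 1, 2 * i + 2, 0, 0]

/-- The sequence `z(u,v) ∈ ℕ^n`: the concatenation of the `n/4` blocks. -/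
def zseq (n : ℕ) (hn : 4 ∣ n) (u v : Fin (n / 4) → Bool) : Fin n → ℕ :=
  fun j =>
    zblock ((j : ℕ) / 4)
      (u ⟨(j : ℕ) / 4, by have := j.isLt; omega⟩)
      (v ⟨(j : ℕ) / 4, by have := j.isLt; omega⟩)
      ⟨(j : ℕ) % 4, by omega⟩

/-!
When `u = v`, the two nonzero entries `2i+1, 2i+2` of the `i`-th block (0-indexed) are adjacent
and in increasing order: at offsets `0, 1` if `u_i` is set, at offsets `2, 3` otherwise.
Picking them in every block gives an increasing subsequence with values `1, 2, …, n/2`.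
-/

lemma card_le_lis {N : ℕ} (x : Fin N → ℕ) (T : Finset (Fin N))
    (hT : ∀ i ∈ T, ∀ j ∈ T, i < j → x i < x j) : T.card ≤ lis x :=
  Finset.le_sup (Finset.mem_filter.2 ⟨Finset.mem_univ T, hT⟩)

lemma le_lis_of_strictMono {m N : ℕ} (x : Fin N → ℕ) (g : Fin m → Fin N)
    (hg : StrictMono g) (hxg : StrictMono (x ∘ g)) : m ≤ lis x := by
  have hT := card_le_lis x (Finset.univ.map ⟨g, hg.injective⟩) <| by
    simp only [Finset.mem_map, Finset.mem_univ, true_and, Function.Embedding.coeFn_mk]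
    rintro _ ⟨a, rfl⟩ _ ⟨b, rfl⟩ hab
    exact hxg (hg.lt_iff_lt.1 hab)
  simpa using hT

lemma zseq_eq_zblock (n : ℕ) (h4 : 4 ∣ n) (u v : Fin (n / 4) → Bool) (j : Fin n)
    (q : Fin (n / 4)) (r : ℕ) (hr : r < 4) (h : (j : ℕ) = 4 * q + r) :
    zseq n h4 u v j = zblock q (u q) (v q) ⟨r, hr⟩ := by
  have hq : (j : ℕ) / 4 = q := by omega
  have hr : (j : ℕ) % 4 = r := by omega
  simp only [zseq, hq, hr, Fin.eta]

def diagOffset (b : Bool) : ℕ := if b then 0 else 2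

lemma diagOffset_le_two (b : Bool) : diagOffset b ≤ 2 := by
  cases b <;> simp [diagOffset]

lemma zblock_self_diagOffset (i : ℕ) (b : Bool) (s : ℕ) (hs : s < 2) :
    zblock i b b ⟨diagOffset b + s, by have := diagOffset_le_two b; omega⟩ = 2 * i + 1 + s := by
  interval_cases s <;> cases b <;> rfl

def halfBlock {n : ℕ} (h4 : 4 ∣ n) (m : Fin (n / 2)) : Fin (n / 4) :=
  ⟨m / 2, by obtain ⟨k, rfl⟩ := h4; have := m.isLt; omega⟩

/-- The `m`-th position of the increasing subsequence of `zseq n h4 u u`. -/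
def diagIndex {n : ℕ} (h4 : 4 ∣ n) (u : Fin (n / 4) → Bool) (m : Fin (n / 2)) : Fin n :=
  ⟨4 * (m / 2) + diagOffset (u (halfBlock h4 m)) + m % 2, by
    have := diagOffset_le_two (u (halfBlock h4 m)); obtain ⟨k, rfl⟩ := h4; have := m.isLt; omega⟩

section DiagIndex

variable {n : ℕ} (h4 : 4 ∣ n) (u : Fin (n / 4) → Bool)

lemma diagIndex_strictMono : StrictMono (diagIndex h4 u) := by
  intro a b hab
  have hab : (a : ℕ) < b := hab
  show 4 * (a / 2) + diagOffset (u (halfBlock h4 a)) + a % 2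
    < 4 * (b / 2) + diagOffset (u (halfBlock h4 b)) + b % 2
  have := diagOffset_le_two (u (halfBlock h4 a))
  rcases (Nat.div_le_div_right (c := 2) hab.le).lt_or_eq with hlt | heq
  · omega
  · have hblock : halfBlock h4 a = halfBlock h4 b := Fin.ext heq
    rw [hblock]
    omega

lemma zseq_diagIndex (m : Fin (n / 2)) : zseq n h4 u u (diagIndex h4 u m) = m + 1 := by
  have hs : (m : ℕ) % 2 < 2 := Nat.mod_lt _ two_pos
  have hr := diagOffset_le_two (u (halfBlock h4 m))
  rw [zseq_eq_zblock n h4 u u _ (halfBlock h4 m) (diagOffset (u (halfBlock h4 m)) + m % 2)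
    (by omega) (Nat.add_assoc _ _ _), zblock_self_diagOffset _ _ _ hs]
  simp only [halfBlock]
  omega

end DiagIndex

theorem stmt5_general (n : ℕ) (h4 : 4 ∣ n) (u : Fin (n / 4) → Bool) :
    n / 2 ≤ lis (zseq n h4 u u) :=
  le_lis_of_strictMono _ _ (diagIndex_strictMono h4 u) fun a b hab => by
    simpa only [Function.comp_apply, zseq_diagIndex, add_lt_add_iff_right] using Fin.lt_def.1 hab

/-- The `u = v` case of the gadget analysis in the proof of Theorem 1.4:
`lis(z(u,u)) ≥ n/2`. -/
theorem stmt5 (n : ℕ) (hn : 0 < n) (h4 : 4 ∣ n) (u : Fin (n / 4) → Bool) :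
    n / 2 ≤ lis (zseq n h4 u u) :=
  stmt5_general n h4 u
end

section
/- Let n be a positive multiple of 4 and let u, v ∈ {0,1}^{n/4}. Then lis(z(u, v)) ≤ n/2 − |{i ∈ {1, …, n/4} : u_i = 0 and v_i = 1}| + 1. -/
/-! Since the entries of an increasing subsequence are distinct, it contains at most one `0`.
Every block has exactly two nonzero entries, and in a block with `u_i = 0`, `v_i = 1` they come
in decreasing order (`2i` before `2i - 1`), so such a block contributes at most one entry. Hence
at most `2 · (n/4) - k` nonzero entries are used, where `k` counts those blocks. -/

open Finset

lemma Finset.sum_ite_one_two_add_card_filter {ι : Type*} (s : Finset ι) (p : ι → Prop)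
    [DecidablePred p] : (∑ i ∈ s, if p i then 1 else 2) + #(s.filter p) = 2 * #s := by
  rw [card_filter, ← sum_add_distrib, sum_const_nat fun i _ => ?_, mul_comm]
  split_ifs <;> rfl

lemma StrictMonoOn.card_filter_eq_le_one {α β : Type*} [LinearOrder α] [Preorder β]
    [DecidableEq β] {f : α → β} {T : Finset α} (hf : StrictMonoOn f T) (c : β) :
    #(T.filter (f · = c)) ≤ 1 := by
  refine card_le_one.2 fun a ha b hb => ?_
  rw [mem_filter] at ha hb
  exact hf.injOn ha.1 hb.1 (ha.2.trans hb.2.symm)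

lemma card_filter_zblock_ne_zero (i : ℕ) (a b : Bool) :
    #(univ.filter fun r => zblock i a b r ≠ 0) = 2 := by
  cases a <;> cases b <;> simp [zblock, Fin.univ_succ, filter_insert, filter_singleton]

lemma zblock_false_true_strictAntiOn (i : ℕ) :
    StrictAntiOn (zblock i false true) {r | zblock i false true r ≠ 0} := by
  intro r hr s hs hrs
  fin_cases r <;> fin_cases s <;> simp_all [zblock]

namespace zseq

variable {n : ℕ} (h4 : 4 ∣ n)

def blockOf (j : Fin n) : Fin (n / 4) := ⟨j / 4, by have := j.isLt; omega⟩

def posInBlock (j : Fin n) : Fin 4 := ⟨j % 4, Nat.mod_lt _ (by norm_num)⟩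

lemma posInBlock_lt_posInBlock {j j' : Fin n} (hb : blockOf h4 j = blockOf h4 j')
    (hlt : j < j') : posInBlock j < posInBlock j' := by
  simp only [blockOf, posInBlock, Fin.ext_iff, Fin.lt_def] at *
  omega

lemma posInBlock_injOn_block (i : Fin (n / 4)) :
    Set.InjOn posInBlock {j : Fin n | blockOf h4 j = i} := by
  intro j hj j' hj' h
  simp only [Set.mem_ofPred_eq, blockOf, posInBlock, Fin.ext_iff] at *
  omega

variable (u v : Fin (n / 4) → Bool)

lemma apply_of_blockOf_eq {j : Fin n} {i : Fin (n / 4)} (hj : blockOf h4 j = i) :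
    zseq n h4 u v j = zblock i (u i) (v i) (posInBlock j) := by
  subst hj; rfl

lemma card_filter_blockOf_ne_zero_le {T : Finset (Fin n)} (hT : StrictMonoOn (zseq n h4 u v) T)
    (i : Fin (n / 4)) :
    #(T.filter fun j => blockOf h4 j = i ∧ zseq n h4 u v j ≠ 0) ≤
      if u i = false ∧ v i = true then 1 else 2 := by
  set S := T.filter fun j => blockOf h4 j = i ∧ zseq n h4 u v j ≠ 0
  have hS : ∀ j ∈ S, j ∈ T ∧ blockOf h4 j = i ∧ zblock i (u i) (v i) (posInBlock j) ≠ 0 := by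
    intro j hj
    obtain ⟨hjT, hji, hj0⟩ := mem_filter.1 hj
    exact ⟨hjT, hji, apply_of_blockOf_eq h4 u v hji ▸ hj0⟩
  split_ifs with hft
  · obtain ⟨hu, hv⟩ := hft
    refine card_le_one.2 fun a ha b hb => ?_
    by_contra hne
    wlog hab : a < b generalizing a b
    · exact this b hb a ha (Ne.symm hne) (lt_of_le_of_ne (not_lt.1 hab) (Ne.symm hne))
    obtain ⟨haT, hai, ha0⟩ := hS a ha
    obtain ⟨hbT, hbi, hb0⟩ := hS b hb
    have hpos := posInBlock_lt_posInBlock h4 (hai.trans hbi.symm) hab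
    have hmono := hT haT hbT hab
    rw [apply_of_blockOf_eq h4 u v hai, apply_of_blockOf_eq h4 u v hbi, hu, hv] at hmono
    rw [hu, hv] at ha0 hb0
    exact (zblock_false_true_strictAntiOn i ha0 hb0 hpos).asymm hmono
  · calc #S ≤ #(univ.filter fun r => zblock i (u i) (v i) r ≠ 0) :=
          card_le_card_of_injOn posInBlock (fun j hj => by simpa using (hS j hj).2.2)
            ((posInBlock_injOn_block h4 i).mono fun j hj => (hS j hj).2.1)
      _ = 2 := card_filter_zblock_ne_zero i (u i) (v i)

end zseq

theorem stmt6_general (n : ℕ) (h4 : 4 ∣ n) (u v : Fin (n / 4) → Bool) :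
    lis (zseq n h4 u v) ≤
      n / 2 - (Finset.univ.filter fun i => u i = false ∧ v i = true).card + 1 := by
  refine Finset.sup_le fun T hTmem => ?_
  set z := zseq n h4 u v
  have hT : StrictMonoOn z T := (mem_filter.1 hTmem).2
  have hzero : #(T.filter (z · = 0)) ≤ 1 := hT.card_filter_eq_le_one 0
  have hnonzero : #(T.filter (¬z · = 0)) ≤
      ∑ i, if u i = false ∧ v i = true then 1 else 2 := by
    rw [card_eq_sum_card_fiberwise fun j _ => mem_univ (zseq.blockOf h4 j)]
    refine sum_le_sum fun i _ => ?_
    rw [filter_filter]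
    simpa only [and_comm] using zseq.card_filter_blockOf_ne_zero_le h4 u v hT i
  have hbudget := sum_ite_one_two_add_card_filter univ fun i => u i = false ∧ v i = true
  rw [card_univ, Fintype.card_fin] at hbudget
  have hsplit := card_filter_add_card_filter_not (s := T) (z · = 0)
  omega

/-- Upper-bound part of the gadget analysis in the proof of Theorem 1.4:
`lis(z(u,v)) ≤ n/2 − |{i : u_i = 0 ∧ v_i = 1}| + 1`. -/
theorem stmt6 (n : ℕ) (hn : 0 < n) (h4 : 4 ∣ n) (u v : Fin (n / 4) → Bool) :
    lis (zseq n h4 u v) ≤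
      n / 2 - (Finset.univ.filter fun i => u i = false ∧ v i = true).card + 1 :=
  stmt6_general n h4 u v
end

section
/- Let n be a positive multiple of 4 and let u, v ∈ {0,1}^{n/4} be such that the Hamming distance between u and v satisfies 16 · |{i : u_i ≠ v_i}| ≥ n. Then min(lis(z(u, v)), lis(z(v, u))) ≤ 15n/32 + 1. -/
/-!
An increasing subsequence of `z(u,v)` uses at most one `0`, and within block `i` at most the two
nonzero values `2i-1, 2i`; when `(u_i, v_i) = (0, 1)` these appear in the wrong order, so only one
of them can be used. Hence `lis z(u,v) ≤ 1 + 2·(n/4) - #{i | (u_i, v_i) = (0, 1)}`. Adding the same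
bound for `z(v,u)`, each index with `u_i ≠ v_i` is lost exactly once, so
`lis z(u,v) + lis z(v,u) ≤ 2 + n - d(u,v) ≤ 2 + 15n/16`.
-/

open Finset

def IsIncreasingOn {N : ℕ} (x : Fin N → ℕ) (T : Finset (Fin N)) : Prop :=
  ∀ i ∈ T, ∀ j ∈ T, i < j → x i < x j

instance {N : ℕ} (x : Fin N → ℕ) (T : Finset (Fin N)) : Decidable (IsIncreasingOn x T) := by
  unfold IsIncreasingOn; infer_instance

lemma lis_le {N : ℕ} {x : Fin N → ℕ} {k : ℕ} (h : ∀ T, IsIncreasingOn x T → T.card ≤ k) :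
    lis x ≤ k :=
  Finset.sup_le fun T hT => h T (mem_filter.1 hT).2

lemma IsIncreasingOn.card_filter_eq_le_one {N : ℕ} {x : Fin N → ℕ} {T : Finset (Fin N)}
    (hT : IsIncreasingOn x T) (c : ℕ) : (T.filter (x · = c)).card ≤ 1 := by
  refine card_le_one.2 fun a ha b hb => ?_
  rw [mem_filter] at ha hb
  rcases lt_trichotomy a b with hab | hab | hab
  · exact absurd (hT a ha.1 b hb.1 hab) (by omega)
  · exact hab
  · exact absurd (hT b hb.1 a ha.1 hab) (by omega)

/-- The relative order of the entries of `zblock i a b` (see `zblock_eq_zlevel_comp`); since it does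
not depend on `i`, the per-block bound becomes a finite check. -/
def zpattern : Bool → Bool → Fin 4 → ℕ
  | false, false => ![0, 0, 1, 2]
  | true,  false => ![1, 0, 0, 2]
  | false, true  => ![0, 2, 1, 0]
  | true,  true  => ![1, 2, 0, 0]

def zlevel (i k : ℕ) : ℕ := if k = 0 then 0 else 2 * i + k

lemma zlevel_strictMono (i : ℕ) : StrictMono (zlevel i) := by
  intro k l hkl
  unfold zlevel
  split_ifs <;> omega

lemma zlevel_eq_zero_iff {i k : ℕ} : zlevel i k = 0 ↔ k = 0 := by
  unfold zlevel
  split_ifs <;> omega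

lemma zblock_eq_zlevel_comp (i : ℕ) (a b : Bool) : zblock i a b = zlevel i ∘ zpattern a b := by
  funext p
  cases a <;> cases b <;> fin_cases p <;> simp [zblock, zpattern, zlevel]

def zblockCapacity (a b : Bool) : ℕ := if a = false ∧ b = true then 1 else 2

lemma card_le_zblockCapacity_of_zpattern :
    ∀ (a b : Bool) (P : Finset (Fin 4)), IsIncreasingOn (zpattern a b) P →
      (∀ p ∈ P, zpattern a b p ≠ 0) → P.card ≤ zblockCapacity a b := by
  decide

lemma card_le_zblockCapacity {i : ℕ} {a b : Bool} {P : Finset (Fin 4)}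
    (hP : IsIncreasingOn (zblock i a b) P) (hpos : ∀ p ∈ P, zblock i a b p ≠ 0) :
    P.card ≤ zblockCapacity a b := by
  rw [zblock_eq_zlevel_comp] at hP hpos
  refine card_le_zblockCapacity_of_zpattern a b P
    (fun p hp q hq hpq => (zlevel_strictMono i).lt_iff_lt.1 (hP p hp q hq hpq))
    (fun p hp => mt zlevel_eq_zero_iff.2 (hpos p hp))

section zseq

variable {n : ℕ} (h4 : 4 ∣ n)

def zblockIndex (j : Fin n) : Fin (n / 4) := ⟨j / 4, by have := j.isLt; omega⟩

def zblockOffset (j : Fin n) : Fin 4 := ⟨j % 4, Nat.mod_lt _ (by norm_num)⟩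

variable (u v : Fin (n / 4) → Bool)

lemma zseq_apply (j : Fin n) :
    zseq n h4 u v j =
      zblock (zblockIndex h4 j) (u (zblockIndex h4 j)) (v (zblockIndex h4 j)) (zblockOffset j) :=
  rfl

lemma IsIncreasingOn.card_filter_zblockIndex_le {T : Finset (Fin n)}
    (hT : IsIncreasingOn (zseq n h4 u v) T) (i : Fin (n / 4)) :
    (T.filter fun j => zseq n h4 u v j ≠ 0 ∧ zblockIndex h4 j = i).card
      ≤ zblockCapacity (u i) (v i) := by
  set S := T.filter fun j => zseq n h4 u v j ≠ 0 ∧ zblockIndex h4 j = i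
  have hS : ∀ j ∈ S, j ∈ T ∧ zseq n h4 u v j ≠ 0 ∧ (j : ℕ) / 4 = i := fun j hj => by
    obtain ⟨hjT, hj0, rfl⟩ := mem_filter.1 hj
    exact ⟨hjT, hj0, rfl⟩
  have hval : ∀ j ∈ S, zseq n h4 u v j = zblock i (u i) (v i) (zblockOffset j) := fun j hj => by
    rw [zseq_apply, show zblockIndex h4 j = i from Fin.ext (hS j hj).2.2]
  have hinj : Set.InjOn zblockOffset (S : Set (Fin n)) := fun j hj k hk hjk => by
    have := (hS j hj).2.2
    have := (hS k hk).2.2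
    have := congrArg Fin.val hjk
    simp only [zblockOffset] at this
    exact Fin.ext (by omega)
  rw [← card_image_of_injOn hinj]
  refine card_le_zblockCapacity (i := i) ?_ ?_
  · simp only [IsIncreasingOn, mem_image]
    rintro _ ⟨j, hj, rfl⟩ _ ⟨k, hk, rfl⟩ hjk
    have hjk' : j < k := by
      have := (hS j hj).2.2
      have := (hS k hk).2.2
      rw [Fin.lt_def] at hjk ⊢
      simp only [zblockOffset] at hjk
      omega
    rw [← hval j hj, ← hval k hk]
    exact hT j (hS j hj).1 k (hS k hk).1 hjk'
  · simp only [mem_image]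
    rintro _ ⟨j, hj, rfl⟩
    rw [← hval j hj]
    exact (hS j hj).2.1

lemma lis_zseq_le : lis (zseq n h4 u v) ≤ 1 + ∑ i, zblockCapacity (u i) (v i) := by
  refine lis_le fun T hT => ?_
  calc T.card
      = (T.filter (zseq n h4 u v · = 0)).card + (T.filter (zseq n h4 u v · ≠ 0)).card :=
        (card_filter_add_card_filter_not _).symm
    _ ≤ 1 + ∑ i, ((T.filter (zseq n h4 u v · ≠ 0)).filter (zblockIndex h4 · = i)).card :=
        add_le_add (hT.card_filter_eq_le_one 0)
          (card_eq_sum_card_fiberwise fun j _ => mem_univ (zblockIndex h4 j)).le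
    _ ≤ 1 + ∑ i, zblockCapacity (u i) (v i) := by
        gcongr with i
        rw [filter_filter]
        exact hT.card_filter_zblockIndex_le h4 u v i

end zseq

lemma zblockCapacity_add_swap (a b : Bool) :
    zblockCapacity a b + zblockCapacity b a + (if a ≠ b then 1 else 0) = 4 := by
  cases a <;> cases b <;> rfl

lemma sum_zblockCapacity_add_swap {m : ℕ} (u v : Fin m → Bool) :
    ∑ i, zblockCapacity (u i) (v i) + ∑ i, zblockCapacity (v i) (u i)
      + (univ.filter fun i => u i ≠ v i).card = 4 * m := by
  rw [card_filter, ← sum_add_distrib, ← sum_add_distrib]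
  simp only [zblockCapacity_add_swap, sum_const, card_univ, Fintype.card_fin, smul_eq_mul,
    mul_comm]

theorem stmt7_general (n : ℕ) (h4 : 4 ∣ n) (u v : Fin (n / 4) → Bool)
    (hdist : n ≤ 16 * (Finset.univ.filter fun i => u i ≠ v i).card) :
    min (lis (zseq n h4 u v)) (lis (zseq n h4 v u)) ≤ 15 * n / 32 + 1 := by
  have huv := lis_zseq_le h4 u v
  have hvu := lis_zseq_le h4 v u
  have hsum := sum_zblockCapacity_add_swap u v
  omega

/-- Fooling-set separation in the proof of Theorem 1.4: if the Hamming distance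
of `u` and `v` is at least `n/16`, then
`min(lis(z(u,v)), lis(z(v,u))) ≤ 15n/32 + 1`. -/
theorem stmt7 (n : ℕ) (hn : 0 < n) (h4 : 4 ∣ n) (u v : Fin (n / 4) → Bool)
    (hdist : n ≤ 16 * (Finset.univ.filter fun i => u i ≠ v i).card) :
    min (lis (zseq n h4 u v)) (lis (zseq n h4 v u)) ≤ 15 * n / 32 + 1 :=
  stmt7_general n h4 u v hdist
end

section
/- Let n be even, let π be a permutation of {1, …, n}, and let A = {π(i) : 1 ≤ i ≤ n/2} be the set of values appearing in the first n/2 positions of π. If g(A) ≥ m + 1, then π is a type 1 order with parameter m. -/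
/-- `π` (a permutation of `{1,…,n}`, with both positions and values represented
`0`-indexed by `Fin n`) is a type 1 order with parameter `m`: there are stream
positions `i_1,…,i_m` and `j_1,…,j_m` with `max I < min J` such that the
original (`1`-indexed) indices interleave as
`1 ≤ π(i_1) < π(j_1) < π(i_2) < ⋯ < π(i_m) < π(j_m) < n`. -/
def IsType1Order {n : ℕ} (π : Equiv.Perm (Fin n)) (m : ℕ) : Prop :=
  ∃ i j : Fin m → Fin n,
    (∀ k l : Fin m, i k < j l) ∧
    (∀ k : Fin m, π (i k) < π (j k)) ∧
    (∀ k l : Fin m, k < l → π (j k) < π (i l)) ∧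
    (∀ k : Fin m, ((π (j k) : ℕ) + 1) < n)

/-- `gInt A` is the minimum number of intervals of consecutive integers whose
union is `A`. -/
noncomputable def gInt (A : Finset ℕ) : ℕ :=
  sInf {k | ∃ I : Fin k → ℕ × ℕ,
    A = Finset.univ.biUnion fun t => Finset.Ico (I t).1 (I t).2}

/-!
A finite set `A ⊆ ℕ` is the union of the intervals `[s, e)` where `s` runs over the starts of its
maximal runs of consecutive integers and `e` is the first gap after `s`; hence `g(A)` is at most
the number of run starts. If `g(A) ≥ m + 1`, choose run starts `s₀ < ⋯ < sₘ`: then `s_k ∈ A` and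
`s_{k+1} - 1 ∉ A` interleave. A value lies in `A` exactly when it is written in the first half of
`π`, so the positions of these values (shifted back to `0`-indexing) are the required `i_k`, `j_k`.
-/

open Finset

lemma gInt_le_card_of_eq_biUnion {α : Type*} {A : Finset ℕ} (S : Finset α) (I : α → ℕ × ℕ)
    (hA : A = S.biUnion fun s => Ico (I s).1 (I s).2) : gInt A ≤ #S := by
  refine Nat.sInf_le ⟨fun t => I (S.equivFin.symm t), ?_⟩
  ext x
  simp only [hA, mem_biUnion, mem_univ, true_and]
  exact ⟨fun ⟨s, hs, hx⟩ => ⟨S.equivFin ⟨s, hs⟩, by simpa using hx⟩,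
    fun ⟨t, hx⟩ => ⟨_, (S.equivFin.symm t).2, hx⟩⟩

/-- The least elements of the maximal runs of consecutive integers in `A`. -/
def runStarts (A : Finset ℕ) : Finset ℕ := A \ A.image (· + 1)

lemma mem_runStarts {A : Finset ℕ} {x : ℕ} :
    x ∈ runStarts A ↔ x ∈ A ∧ ∀ y ∈ A, y + 1 ≠ x := by
  simp [runStarts]

lemma exists_ge_notMem (A : Finset ℕ) (s : ℕ) : ∃ z, s ≤ z ∧ z ∉ A := by
  obtain ⟨N, hN⟩ := A.exists_nat_subset_range
  exact ⟨s + N, by omega, fun hz => by simpa using hN hz⟩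

noncomputable def runEnd (A : Finset ℕ) (s : ℕ) : ℕ :=
  Nat.find (exists_ge_notMem A s)

lemma mem_of_le_of_lt_runEnd {A : Finset ℕ} {s x : ℕ} (hs : s ≤ x) (hx : x < runEnd A s) :
    x ∈ A := by
  by_contra hxA
  exact Nat.find_min (exists_ge_notMem A s) hx ⟨hs, hxA⟩

lemma exists_mem_runStarts_le {A : Finset ℕ} {x : ℕ} (hx : x ∈ A) :
    ∃ s ∈ runStarts A, s ≤ x ∧ x < runEnd A s := by
  have hrun : ∃ y, ∀ z, y ≤ z → z ≤ x → z ∈ A := ⟨x, fun z h₁ h₂ => le_antisymm h₂ h₁ ▸ hx⟩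
  set s := Nat.find hrun
  have hsA : ∀ z, s ≤ z → z ≤ x → z ∈ A := Nat.find_spec hrun
  have hsx : s ≤ x := Nat.find_min' hrun fun z h₁ h₂ => le_antisymm h₂ h₁ ▸ hx
  refine ⟨s, mem_runStarts.2 ⟨hsA s le_rfl hsx, fun y hy hys => ?_⟩, hsx, ?_⟩
  · refine Nat.find_min hrun (m := y) (by omega) fun z h₁ h₂ => ?_
    rcases h₁.eq_or_lt with rfl | h₁
    · exact hy
    · exact hsA z (by omega) h₂
  · obtain ⟨hse, heA⟩ := Nat.find_spec (exists_ge_notMem A s)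
    by_contra! hex
    exact heA (hsA _ hse hex)

lemma eq_biUnion_runStarts (A : Finset ℕ) :
    A = (runStarts A).biUnion fun s => Ico s (runEnd A s) := by
  ext x
  simp only [mem_biUnion, mem_Ico]
  exact ⟨exists_mem_runStarts_le, fun ⟨_, _, hsx, hxs⟩ => mem_of_le_of_lt_runEnd hsx hxs⟩

lemma gInt_le_card_runStarts (A : Finset ℕ) : gInt A ≤ #(runStarts A) :=
  gInt_le_card_of_eq_biUnion _ (fun s => (s, runEnd A s)) (eq_biUnion_runStarts A)

lemma exists_interleaving_of_lt_gInt {A : Finset ℕ} {m : ℕ} (h : m + 1 ≤ gInt A) :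
    ∃ (a : Fin (m + 1) → ℕ) (b : Fin m → ℕ), (∀ k, a k ∈ A) ∧ (∀ k, b k ∉ A) ∧
      (∀ k, a k.castSucc < b k) ∧ (∀ k, b k < a k.succ) := by
  obtain ⟨T, hTA, hT⟩ := exists_subset_card_eq (h.trans (gInt_le_card_runStarts A))
  set σ := T.orderEmbOfFin hT
  have hσ : ∀ k, σ k ∈ runStarts A := fun k => hTA (T.orderEmbOfFin_mem hT k)
  have hlt : ∀ k : Fin m, σ k.castSucc < σ k.succ := fun k => σ.strictMono Fin.castSucc_lt_succ
  have hgap : ∀ k : Fin m, σ k.succ - 1 ∉ A := fun k hk =>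
    (mem_runStarts.1 (hσ k.succ)).2 _ hk (by have := hlt k; omega)
  refine ⟨σ, fun k => σ k.succ - 1, fun k => (mem_runStarts.1 (hσ k)).1, hgap, fun k => ?_,
    fun k => by dsimp only; have := hlt k; omega⟩
  have hne : σ k.castSucc ≠ σ k.succ - 1 := fun he =>
    hgap k (he ▸ (mem_runStarts.1 (hσ k.castSucc)).1)
  have := hlt k
  dsimp only
  omega

lemma isType1Order_of_interleaving {n m t : ℕ} (π : Equiv.Perm (Fin n))
    (u : Fin (m + 1) → Fin n) (w : Fin m → Fin n) (hu : ∀ k, (π.symm (u k) : ℕ) < t)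
    (hw : ∀ k, t ≤ (π.symm (w k) : ℕ)) (huw : ∀ k, u k.castSucc < w k)
    (hwu : ∀ k, w k < u k.succ) : IsType1Order π m := by
  have hmono : StrictMono u := Fin.strictMono_iff_lt_succ.2 fun k => (huw k).trans (hwu k)
  refine ⟨fun k => π.symm (u k.castSucc), fun k => π.symm (w k), fun k l => ?_, ?_, ?_, ?_⟩ <;>
    simp only [Equiv.apply_symm_apply]
  · exact Fin.lt_def.2 ((hu _).trans_le (hw l))
  · exact huw
  · exact fun k l hkl => (hwu k).trans_le (hmono.monotone (Fin.succ_le_castSucc_iff.2 hkl))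
  · exact fun k => by have := Fin.lt_def.1 (hwu k); have := (u k.succ).isLt; omega

/-- Combinatorial step in the proof of Claim 4.2: if the set `A` of values
(`1`-indexed) appearing in the first `n/2` positions of `π` satisfies
`g(A) ≥ m + 1`, then `π` is a type 1 order with parameter `m`. -/
theorem stmt9 (n m : ℕ) (π : Equiv.Perm (Fin n))
    (h : m + 1 ≤ gInt (Finset.image
      (fun i : Fin (n / 2) => ((π ⟨(i : ℕ), by have := i.isLt; omega⟩ : Fin n) : ℕ) + 1)
      Finset.univ)) :
    IsType1Order π m := by
  set A := Finset.image
    (fun i : Fin (n / 2) => ((π ⟨(i : ℕ), by have := i.isLt; omega⟩ : Fin n) : ℕ) + 1) univ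
  have hfirst : ∀ x ∈ A, ∃ v : Fin n, (π.symm v : ℕ) < n / 2 ∧ (v : ℕ) + 1 = x := by
    simp only [A, mem_image, mem_univ, true_and]
    rintro _ ⟨i, rfl⟩
    exact ⟨_, by simp, rfl⟩
  have hsecond : ∀ v : Fin n, (v : ℕ) + 1 ∉ A → n / 2 ≤ (π.symm v : ℕ) := fun v hv => by
    by_contra! hlt
    exact hv (mem_image.2 ⟨⟨_, hlt⟩, mem_univ _, by simp⟩)
  obtain ⟨a, b, haA, hbA, hab, hba⟩ := exists_interleaving_of_lt_gInt h
  choose u hu hua using fun k => hfirst _ (haA k)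
  have hb : ∀ k, 1 ≤ b k ∧ b k ≤ n := fun k => by
    have := hab k; have := hba k; have := hua k.succ; have := (u k.succ).isLt; omega
  refine isType1Order_of_interleaving π u (fun k => ⟨b k - 1, by have := hb k; omega⟩)
    hu (fun k => hsecond _ ?_) (fun k => ?_) (fun k => ?_)
  · simpa [Nat.sub_add_cancel (hb k).1] using hbA k
  · have := hab k; have := hua k.castSucc; exact Fin.lt_def.2 (by dsimp only; omega)
  · have := hba k; have := hua k.succ; have := hb k; exact Fin.lt_def.2 (by dsimp only; omega)
end

section
/- For every n ≥ 32 divisible by 32, the number of sets A ⊆ {1, …, n} with |A| = n/2 and g(A) ≤ n/32 is at most (n/2) · 2^{7n/16}. -/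
open Finset
open scoped symmDiff

lemma exists_eq_biUnion_Ico_gInt (A : Finset ℕ) : ∃ I : Fin (gInt A) → ℕ × ℕ,
    A = univ.biUnion fun t => Ico (I t).1 (I t).2 := by
  refine Nat.sInf_mem (s := {k | ∃ I : Fin k → ℕ × ℕ,
    A = univ.biUnion fun t => Ico (I t).1 (I t).2})
    ⟨#A, fun t => ((A.equivFin.symm t : ℕ), A.equivFin.symm t + 1), ?_⟩
  ext x
  simp only [Nat.Ico_succ_singleton, mem_biUnion, mem_univ, mem_singleton, true_and]
  exact ⟨fun hx => ⟨A.equivFin ⟨x, hx⟩, by simp⟩, by rintro ⟨t, rfl⟩; exact (A.equivFin.symm t).2⟩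

/-- `x ∈ jumps A` iff exactly one of `x`, `x - 1` lies in `A`; and `0 ∈ jumps A` iff `0 ∈ A`. -/
def jumps (A : Finset ℕ) : Finset ℕ := A ∆ A.image (· + 1)

lemma jumps_union_subset (A B : Finset ℕ) : jumps (A ∪ B) ⊆ jumps A ∪ jumps B := by
  intro x
  simp only [jumps, mem_union, mem_symmDiff, mem_image]
  grind

lemma jumps_biUnion_subset {ι : Type*} [DecidableEq ι] (s : Finset ι) (f : ι → Finset ℕ) :
    jumps (s.biUnion f) ⊆ s.biUnion fun i => jumps (f i) := by
  induction s using Finset.induction_on with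
  | empty => simp [jumps]
  | insert i s _ ih =>
    rw [biUnion_insert, biUnion_insert]
    exact (jumps_union_subset _ _).trans (union_subset_union subset_rfl ih)

lemma jumps_Ico_subset (a b : ℕ) : jumps (Ico a b) ⊆ {a, b} := by
  intro x
  simp only [jumps, image_add_right_Ico, mem_symmDiff, mem_Ico, mem_insert, mem_singleton]
  omega

lemma card_jumps_biUnion_Ico_le {ι : Type*} [DecidableEq ι] (s : Finset ι) (I : ι → ℕ × ℕ) :
    #(jumps (s.biUnion fun i => Ico (I i).1 (I i).2)) ≤ #s * 2 :=
  (card_le_card (jumps_biUnion_subset _ _)).trans <| card_biUnion_le_card_mul _ _ _ fun _ _ =>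
    (card_le_card (jumps_Ico_subset _ _)).trans card_le_two

lemma card_jumps_le_gInt (A : Finset ℕ) : #(jumps A) ≤ 2 * gInt A := by
  obtain ⟨I, hI⟩ := exists_eq_biUnion_Ico_gInt A
  have h := card_jumps_biUnion_Ico_le univ I
  rw [← hI, card_univ, Fintype.card_fin] at h
  omega

lemma jumps_subset_Icc {A : Finset ℕ} {a b : ℕ} (h : A ⊆ Icc a b) : jumps A ⊆ Icc a (b + 1) := by
  intro x hx
  simp only [jumps, mem_symmDiff, mem_image] at hx
  rcases hx with ⟨hx, -⟩ | ⟨⟨y, hy, rfl⟩, -⟩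
  · exact Icc_subset_Icc_right (by omega) (h hx)
  · have := mem_Icc.mp (h hy)
    exact mem_Icc.mpr (by omega)

/-- Summing shows `∑ C = ∑ C + #C`. -/
lemma eq_empty_of_image_succ_eq {C : Finset ℕ} (h : C.image (· + 1) = C) : C = ∅ := by
  have hsum := congrArg (fun s => ∑ x ∈ s, x) h
  simp only [sum_image (add_left_injective 1).injOn, sum_add_distrib, sum_const,
    smul_eq_mul, mul_one] at hsum
  exact card_eq_zero.mp (by omega)

/-- `jumps` is additive for `∆`, and its kernel is trivial. -/
lemma jumps_injective : Function.Injective jumps := by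
  intro A B h
  have hC : (A ∆ B).image (· + 1) = A ∆ B := by
    rw [image_symmDiff _ _ (add_left_injective 1), eq_comm, ← symmDiff_eq_bot,
      symmDiff_symmDiff_symmDiff_comm]
    exact symmDiff_eq_bot.mpr h
  exact symmDiff_eq_bot.mp (eq_empty_of_image_succ_eq hC)

lemma ncard_setOf_gInt_le_le_sum_choose (N k : ℕ) :
    {A : Finset ℕ | A ⊆ Icc 1 N ∧ gInt A ≤ k}.ncard ≤
      ∑ i ∈ range (2 * k + 1), (N + 1).choose i := by
  set T := (range (2 * k + 1)).biUnion fun i => (Icc 1 (N + 1)).powersetCard i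
  have hmaps : ∀ A ∈ {A : Finset ℕ | A ⊆ Icc 1 N ∧ gInt A ≤ k}, jumps A ∈ (T : Set (Finset ℕ)) := by
    rintro A ⟨hsub, hg⟩
    simp only [T, coe_biUnion, coe_range, Set.mem_Iio, Set.mem_iUnion, mem_coe,
      mem_powersetCard, exists_prop]
    exact ⟨#(jumps A), by linarith [card_jumps_le_gInt A], jumps_subset_Icc hsub, rfl⟩
  calc _ ≤ (T : Set (Finset ℕ)).ncard :=
        Set.ncard_le_ncard_of_injOn jumps hmaps jumps_injective.injOn T.finite_toSet
    _ ≤ ∑ i ∈ range (2 * k + 1), #((Icc 1 (N + 1)).powersetCard i) := by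
        rw [Set.ncard_coe_finset]; exact card_biUnion_le
    _ = ∑ i ∈ range (2 * k + 1), (N + 1).choose i := by
        simp only [card_powersetCard, Nat.card_Icc, Nat.add_sub_cancel]

/-- Compare each term of `∑_{i ≤ a} C(a+b, i)` with the term `C(a+b, i) a^i b^(a+b-i)` of the
binomial expansion of `(a+b)^(a+b)`. -/
lemma sum_range_choose_mul_pow_le {a b : ℕ} (hab : a ≤ b) :
    (∑ i ∈ range (a + 1), (a + b).choose i) * (a ^ a * b ^ b) ≤ (a + b) ^ (a + b) := by
  rw [add_pow, sum_mul]
  calc _ ≤ ∑ i ∈ range (a + 1), a ^ i * b ^ (a + b - i) * (a + b).choose i := by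
        refine sum_le_sum fun i hi => ?_
        have hi : i ≤ a := Nat.lt_succ_iff.mp (mem_range.mp hi)
        calc (a + b).choose i * (a ^ a * b ^ b)
            = (a + b).choose i * (a ^ i * a ^ (a - i) * b ^ b) := by
              rw [← pow_add, Nat.add_sub_cancel' hi]
          _ ≤ (a + b).choose i * (a ^ i * b ^ (a - i) * b ^ b) := by gcongr
          _ = a ^ i * b ^ (a + b - i) * (a + b).choose i := by
              rw [show a + b - i = a - i + b by omega, pow_add]; ring
    _ ≤ _ := sum_le_sum_of_subset (range_subset_range.mpr (by omega))

/-- The entropy bound `C(33m, 2m) ≤ 2^(33 H(2/33) m)`, with `33 H(2/33) ≈ 10.9 < 14`; concretely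
`33^33 ≤ 2^14 · 2^2 · 31^31`. -/
lemma sum_range_choose_le_two_pow {m : ℕ} (hm : 0 < m) :
    ∑ i ∈ range (2 * m + 1), (32 * m + 1).choose i ≤ 2 ^ (14 * m) := by
  have hpos : 0 < (2 * m) ^ (2 * m) * (31 * m) ^ (31 * m) := by positivity
  refine Nat.le_of_mul_le_mul_right ?_ hpos
  calc _ ≤ (∑ i ∈ range (2 * m + 1), (2 * m + 31 * m).choose i) *
        ((2 * m) ^ (2 * m) * (31 * m) ^ (31 * m)) :=
        Nat.mul_le_mul_right _ (sum_le_sum fun i _ => Nat.choose_le_choose i (by omega))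
    _ ≤ (2 * m + 31 * m) ^ (2 * m + 31 * m) := sum_range_choose_mul_pow_le (by omega)
    _ = (33 ^ 33) ^ m * m ^ (33 * m) := by
        rw [← pow_mul, ← mul_pow]; ring_nf
    _ ≤ (2 ^ 14 * 2 ^ 2 * 31 ^ 31) ^ m * m ^ (33 * m) := by gcongr; norm_num
    _ = 2 ^ (14 * m) * ((2 * m) ^ (2 * m) * (31 * m) ^ (31 * m)) := by
        simp only [mul_pow, ← pow_mul]; ring

/-- Counting estimate in the proof of Claim 4.2: for `32 ∣ n`, `n ≥ 32`, the
number of sets `A ⊆ {1,…,n}` with `|A| = n/2` and `g(A) ≤ n/32` is at most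
`(n/2) · 2^{7n/16}`. -/
theorem stmt10 (n : ℕ) (hn : 32 ≤ n) (h32 : 32 ∣ n) :
    Set.ncard {A : Finset ℕ | A ⊆ Finset.Icc 1 n ∧ A.card = n / 2 ∧
        gInt A ≤ n / 32} ≤
      (n / 2) * 2 ^ (7 * n / 16) := by
  obtain ⟨m, rfl⟩ := h32
  set S := {A : Finset ℕ | A ⊆ Icc 1 (32 * m) ∧ gInt A ≤ m}
  have hsub : {A : Finset ℕ | A ⊆ Icc 1 (32 * m) ∧ #A = 32 * m / 2 ∧ gInt A ≤ 32 * m / 32} ⊆ S :=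
    fun A ⟨hA, _, hg⟩ => ⟨hA, by omega⟩
  have hfin : S.Finite :=
    (Icc 1 (32 * m)).powerset.finite_toSet.subset fun A hA => mem_powerset.mpr hA.1
  calc _ ≤ S.ncard := Set.ncard_le_ncard hsub hfin
    _ ≤ ∑ i ∈ range (2 * m + 1), (32 * m + 1).choose i := ncard_setOf_gInt_le_le_sum_choose _ _
    _ ≤ 2 ^ (14 * m) := sum_range_choose_le_two_pow (by omega)
    _ ≤ 32 * m / 2 * 2 ^ (7 * (32 * m) / 16) := by
        rw [show 7 * (32 * m) / 16 = 14 * m by omega]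
        exact Nat.le_mul_of_pos_left _ (by omega)
end

section
/- There exists N such that for every n ≥ N divisible by 32, the number of permutations π of {1, …, n} that are not type 1 orders with parameter n/32 is at most 2^{−n/32} · n!. Equivalently, a permutation of {1, …, n} chosen uniformly at random is a type 1 order with parameter n/32 with probability at least 1 − 2^{−n/32}. -/
/-!
Put `h = n / 2` and record, for each value `v`, whether `π⁻¹ v < h`. If this word switches
value more than `2m` times, its switch positions, starting from the first one in the first half,
are values `v₁ < v₂ < ⋯ < v_{2m} < n - 1` alternately placed in the first and in the second half
of the stream: a type 1 order. A word is determined by its first letter and its set of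
switches, so at most `2 ∑_{j ≤ 2m} C(n - 1, j)` words switch at most `2m` times, and each word
comes from at most `h! ²` permutations (a coset of the stabiliser of the two halves). Since
`C(N, j + 1) ≥ 3 C(N, j)` for `4 (j + 1) ≤ N`, that number of words times `2 ^ m` is at most
`C(n, h) = n! / h! ²`.
-/

open Finset Equiv Nat

def IsSwitch (u : ℕ → Bool) (i : ℕ) : Prop := u i ≠ u (i + 1)

instance (u : ℕ → Bool) : DecidablePred (IsSwitch u) := fun _ => instDecidableNot

theorem eq_apply_zero_iff_even_count_isSwitch (u : ℕ → Bool) (x : ℕ) :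
    u x = u 0 ↔ Even (Nat.count (IsSwitch u) x) := by
  induction x with
  | zero => simp
  | succ x ih =>
    rw [Nat.count_succ]
    by_cases hx : IsSwitch u x
    · have hflip : u (x + 1) = !u x := by
        cases h : u x <;> simp_all [IsSwitch]
      rw [if_pos hx, Nat.even_add_one, ← ih, hflip]
      cases u x <;> cases u 0 <;> simp
    · rw [if_neg hx, add_zero, ← ih, not_not.mp hx]

def HasAlternation (u : ℕ → Bool) (k N : ℕ) : Prop :=
  ∃ a b : Fin k → ℕ, (∀ t, u (a t) = true) ∧ (∀ t, u (b t) = false) ∧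
    (∀ t, a t < b t) ∧ (∀ s t, s < t → b s < a t) ∧ ∀ t, b t < N

/-- The switches `c₀ < c₁ < ⋯` of `u` carry alternating values `u cⱼ`. -/
theorem hasAlternation_of_lt_count_isSwitch {u : ℕ → Bool} {k N : ℕ}
    (h : 2 * k < Nat.count (IsSwitch u) N) : HasAlternation u k N := by
  set c := Nat.nth (IsSwitch u)
  have hcard : ∀ j < Nat.count (IsSwitch u) N, ∀ hf : (Set.ofPred (IsSwitch u)).Finite,
      j < #hf.toFinset := fun j hj hf => hj.trans_le (Nat.count_le_card hf N)
  have hlt : ∀ i j, i < j → j < Nat.count (IsSwitch u) N → c i < c j :=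
    fun i j hij hj => Nat.nth_lt_nth' hij (hcard j hj)
  set e := (!u 0).toNat
  have hidx : ∀ t : Fin k, 2 * t + e + 1 < Nat.count (IsSwitch u) N := fun t => by
    have : e ≤ 1 := Bool.toNat_le _
    omega
  have hval : ∀ j < Nat.count (IsSwitch u) N, u (c j) = true ↔ Even (j + e) := by
    intro j hj
    have := eq_apply_zero_iff_even_count_isSwitch u (c j)
    rw [Nat.count_nth (hcard j hj)] at this
    cases h0 : u 0
    · rw [h0] at this
      simp [e, h0, Nat.even_add_one, ← this]
    · simpa [e, h0] using this
  refine ⟨fun t => c (2 * t + e), fun t => c (2 * t + e + 1), fun t => ?_, fun t => ?_,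
    fun t => hlt _ _ (by omega) (hidx t), fun s t hst => hlt _ _ ?_ (by have := hidx t; omega),
    fun t => Nat.nth_lt_of_lt_count (hidx t)⟩
  · exact (hval _ (by have := hidx t; omega)).2 ⟨t + e, by ring⟩
  · have := hval _ (hidx t)
    rw [Bool.eq_false_iff, ne_eq, this, Nat.not_even_iff_odd]
    exact ⟨t + e, by ring⟩
  · have : (s : ℕ) < t := hst
    omega

def wordSeq {n : ℕ} (w : Fin n → Bool) (i : ℕ) : Bool := if h : i < n then w ⟨i, h⟩ else false

theorem wordSeq_of_lt {n i : ℕ} (w : Fin n → Bool) (hi : i < n) : wordSeq w i = w ⟨i, hi⟩ :=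
  dif_pos hi

theorem eq_of_filter_isSwitch_eq {u v : ℕ → Bool} {N x : ℕ} (h0 : u 0 = v 0)
    (hS : {i ∈ range N | IsSwitch u i} = {i ∈ range N | IsSwitch v i}) (hx : x ≤ N) :
    u x = v x := by
  have hrestrict (p : ℕ → Prop) [DecidablePred p] :
      {i ∈ range x | p i} = {i ∈ range N | p i} ∩ range x := by
    ext i
    have : i < x → i < N := by omega
    simp only [mem_filter, mem_inter, mem_range]
    tauto
  have hcount : Nat.count (IsSwitch u) x = Nat.count (IsSwitch v) x := by
    rw [Nat.count_eq_card_filter_range, Nat.count_eq_card_filter_range, hrestrict, hrestrict, hS]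
  have hu := eq_apply_zero_iff_even_count_isSwitch u x
  rw [hcount, ← eq_apply_zero_iff_even_count_isSwitch v x, h0] at hu
  cases hux : u x <;> cases hvx : v x <;> cases hv0 : v 0 <;> simp_all

theorem card_filter_count_isSwitch_le (n r : ℕ) :
    #{w : Fin n → Bool | Nat.count (IsSwitch (wordSeq w)) (n - 1) ≤ r} ≤
      2 * ∑ j ∈ range (r + 1), (n - 1).choose j := by
  set words : Finset (Fin n → Bool) := {w | Nat.count (IsSwitch (wordSeq w)) (n - 1) ≤ r}
  let code (w : Fin n → Bool) : Bool × Finset ℕ :=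
    (wordSeq w 0, {i ∈ range (n - 1) | IsSwitch (wordSeq w) i})
  let codes := (univ : Finset Bool) ×ˢ (range (r + 1)).biUnion (powersetCard · (range (n - 1)))
  have hmaps : Set.MapsTo code words codes := by
    intro w hw
    rw [mem_coe, mem_filter] at hw
    simp only [codes, code, mem_coe, mem_product, mem_univ, mem_biUnion, mem_range,
      mem_powersetCard, true_and]
    rw [← Nat.count_eq_card_filter_range]
    exact ⟨_, Nat.lt_succ_of_le hw.2, filter_subset _ _, rfl⟩
  have hinj : Set.InjOn code words := by
    intro w _ w' _ hcode
    obtain ⟨h0, hS⟩ := Prod.mk.inj hcode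
    funext i
    rw [← wordSeq_of_lt w i.isLt, ← wordSeq_of_lt w' i.isLt]
    exact eq_of_filter_isSwitch_eq h0 hS (by omega)
  calc #words ≤ #codes := card_le_card_of_injOn code hmaps hinj
    _ ≤ 2 * ∑ j ∈ range (r + 1), #(powersetCard j (range (n - 1))) := by
      rw [card_product, Finset.card_univ, Fintype.card_bool]
      exact Nat.mul_le_mul_left _ card_biUnion_le
    _ = _ := by simp only [card_powersetCard, card_range]

theorem card_filter_comp_symm_eq_le {α ι : Type*} [Fintype α] [DecidableEq α] [Fintype ι]
    [DecidableEq ι] (f w : α → ι) :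
    #{π : Perm α | f ∘ π.symm = w} ≤ ∏ i, (Fintype.card {a // f a = i})! := by
  rw [← DomMulAct.stabilizer_card f, Fintype.card_subtype]
  obtain hempty | ⟨π₀, hπ₀⟩ := eq_empty_or_nonempty {π : Perm α | f ∘ π.symm = w}
  · simp [hempty]
  rw [mem_filter] at hπ₀
  refine card_le_card_of_injOn (fun π => π⁻¹ * π₀) (fun π hπ => ?_) (fun π _ π' _ h => ?_)
  · rw [mem_coe, mem_filter] at hπ ⊢
    refine ⟨mem_univ _, funext fun a => ?_⟩
    have := congrFun (hπ.2.trans hπ₀.2.symm) (π₀ a)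
    simpa using this
  · simpa using h

def positionWord {n : ℕ} (h : ℕ) (π : Perm (Fin n)) : Fin n → Bool :=
  (fun a : Fin n => decide ((a : ℕ) < h)) ∘ π.symm

theorem isType1Order_of_hasAlternation {n m h : ℕ} {π : Perm (Fin n)}
    (hπ : HasAlternation (wordSeq (positionWord h π)) m (n - 1)) : IsType1Order π m := by
  obtain ⟨a, b, ha, hb, hab, hba, hbn⟩ := hπ
  have hbn' (t : Fin m) : b t < n := by have := hbn t; omega
  have han' (t : Fin m) : a t < n := (hab t).trans (hbn' t)
  have hfirst (t : Fin m) : (π.symm ⟨a t, han' t⟩ : ℕ) < h := by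
    simpa [wordSeq_of_lt _ (han' t), positionWord] using ha t
  have hsecond (t : Fin m) : h ≤ (π.symm ⟨b t, hbn' t⟩ : ℕ) := by
    simpa [wordSeq_of_lt _ (hbn' t), positionWord] using hb t
  refine ⟨fun t => π.symm ⟨a t, han' t⟩, fun t => π.symm ⟨b t, hbn' t⟩,
    fun k l => Fin.lt_def.mpr ((hfirst k).trans_le (hsecond l)), fun t => ?_,
    fun s t hst => ?_, fun t => ?_⟩
  · simpa [Fin.lt_def] using hab t
  · simpa [Fin.lt_def] using hba s t hst
  · have := hbn t
    simp only [apply_symm_apply]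
    omega

theorem three_pow_mul_choose_le {N j t : ℕ} (h : 4 * (j + t) ≤ N) :
    3 ^ t * N.choose j ≤ N.choose (j + t) := by
  induction t with
  | zero => simp
  | succ t ih =>
    have hstep : 3 * N.choose (j + t) * (j + t + 1) ≤ N.choose (j + t + 1) * (j + t + 1) := by
      rw [choose_succ_right_eq]
      calc 3 * N.choose (j + t) * (j + t + 1) = N.choose (j + t) * (3 * (j + t + 1)) := by ring
        _ ≤ N.choose (j + t) * (N - (j + t)) := Nat.mul_le_mul_left _ (by omega)
    calc 3 ^ (t + 1) * N.choose j = 3 * (3 ^ t * N.choose j) := by ring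
      _ ≤ 3 * N.choose (j + t) := Nat.mul_le_mul_left _ (ih (by omega))
      _ ≤ N.choose (j + (t + 1)) := Nat.le_of_mul_le_mul_right hstep (by omega)

theorem sum_range_choose_le {N r : ℕ} (h : 4 * r ≤ N) :
    ∑ j ∈ range (r + 1), N.choose j ≤ (r + 1) * N.choose r := by
  calc ∑ j ∈ range (r + 1), N.choose j ≤ ∑ _j ∈ range (r + 1), N.choose r := by
        refine sum_le_sum fun j hj => ?_
        have hjr : j + (r - j) = r := by rw [mem_range] at hj; omega
        calc N.choose j ≤ 3 ^ (r - j) * N.choose j := Nat.le_mul_of_pos_left _ (by positivity)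
          _ ≤ N.choose (j + (r - j)) := three_pow_mul_choose_le (by omega)
          _ = N.choose r := by rw [hjr]
    _ = (r + 1) * N.choose r := by rw [sum_const, card_range, smul_eq_mul]

theorem two_mul_sum_choose_mul_two_pow_le {m : ℕ} (hm : 0 < m) :
    2 * (∑ j ∈ range (2 * m + 1), (32 * m - 1).choose j) * 2 ^ m ≤
      (32 * m).choose (16 * m) := by
  have hpow : 2 * (2 * m + 1) * 2 ^ m ≤ 3 ^ (2 * m + 2) := by
    have : m + 1 ≤ 2 ^ m := Nat.lt_two_pow_self
    calc 2 * (2 * m + 1) * 2 ^ m ≤ 4 * 2 ^ m * 2 ^ m := by nlinarith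
      _ = 4 ^ (m + 1) := by
        rw [pow_succ, show (4 : ℕ) ^ m = 2 ^ m * 2 ^ m by rw [← mul_pow]; norm_num]
        ring
      _ ≤ 9 ^ (m + 1) := Nat.pow_le_pow_left (by norm_num) _
      _ = 3 ^ (2 * m + 2) := by rw [show 2 * m + 2 = 2 * (m + 1) by ring, pow_mul]; norm_num
  calc 2 * (∑ j ∈ range (2 * m + 1), (32 * m - 1).choose j) * 2 ^ m
      ≤ 2 * ((2 * m + 1) * (32 * m - 1).choose (2 * m)) * 2 ^ m := by
        gcongr; exact sum_range_choose_le (by omega)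
    _ = 2 * (2 * m + 1) * 2 ^ m * (32 * m - 1).choose (2 * m) := by ring
    _ ≤ 3 ^ (2 * m + 2) * (32 * m).choose (2 * m) := by gcongr; omega
    _ ≤ (32 * m).choose (2 * m + (2 * m + 2)) := three_pow_mul_choose_le (by omega)
    _ ≤ (32 * m).choose (16 * m) := by
        simpa [show 32 * m / 2 = 16 * m by omega] using choose_le_middle _ (32 * m)

open Classical in
theorem card_not_isType1Order_mul_two_pow_le {m : ℕ} (hm : 0 < m) :
    #{π : Perm (Fin (32 * m)) | ¬ IsType1Order π m} * 2 ^ m ≤ (32 * m)! := by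
  set badWords : Finset (Fin (32 * m) → Bool) :=
    {w | Nat.count (IsSwitch (wordSeq w)) (32 * m - 1) ≤ 2 * m}
  have hmaps : ∀ π ∈ ({π | ¬ IsType1Order π m} : Finset (Perm (Fin (32 * m)))),
      positionWord (16 * m) π ∈ badWords := by
    intro π hπ
    rw [mem_filter] at hπ ⊢
    exact ⟨mem_univ _, not_lt.mp fun hlt =>
      hπ.2 (isType1Order_of_hasAlternation (hasAlternation_of_lt_count_isSwitch hlt))⟩
  have hfiber : ∀ w ∈ badWords,
      #{π ∈ ({π | ¬ IsType1Order π m} : Finset _) | positionWord (16 * m) π = w} ≤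
        (16 * m)! * (16 * m)! := by
    intro w _
    calc _ ≤ #{π : Perm (Fin (32 * m)) | positionWord (16 * m) π = w} := by
          rw [filter_filter]; exact card_le_card (monotone_filter_right _ fun _ _ h => h.2)
      _ ≤ _ := card_filter_comp_symm_eq_le _ w
      _ = (16 * m)! * (16 * m)! := by
          simp only [Fintype.prod_bool, Fintype.card_subtype, decide_eq_true_eq,
            decide_eq_false_iff_not, filter_not, card_univ_sdiff, Fin.card_filter_val_lt,
            Fintype.card_fin]
          rw [min_eq_right (by omega), show 32 * m - 16 * m = 16 * m by omega]
  calc _ ≤ (16 * m)! * (16 * m)! * #badWords * 2 ^ m :=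
        Nat.mul_le_mul_right _ (card_le_mul_card_image_of_maps_to hmaps _ hfiber)
    _ ≤ (16 * m)! * (16 * m)! * (2 * ∑ j ∈ range (2 * m + 1), (32 * m - 1).choose j) *
          2 ^ m := by
        gcongr; exact card_filter_count_isSwitch_le _ _
    _ ≤ (16 * m)! * (16 * m)! * (32 * m).choose (16 * m) := by
        rw [mul_assoc]; exact Nat.mul_le_mul_left _ (two_mul_sum_choose_mul_two_pow_le hm)
    _ = (32 * m)! := by
        rw [← choose_mul_factorial_mul_factorial (show 16 * m ≤ 32 * m by omega),
          show 32 * m - 16 * m = 16 * m by omega]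
        ring

/-- Claim 4.2: for all large enough `n` divisible by `32`, the number of
permutations of `{1,…,n}` that are not type 1 orders with parameter `n/32` is
at most `2^{−n/32} · n!`; equivalently, a uniformly random permutation is a
type 1 order with parameter `n/32` with probability at least `1 − 2^{−n/32}`. -/
theorem stmt11 : ∃ N : ℕ, ∀ n : ℕ, N ≤ n → 32 ∣ n →
    Set.ncard {π : Equiv.Perm (Fin n) | ¬ IsType1Order π (n / 32)} * 2 ^ (n / 32) ≤
      Nat.factorial n := by
  classical
  refine ⟨1, fun n hn ⟨m, hnm⟩ => ?_⟩
  subst hnm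
  rw [Nat.mul_div_cancel_left m (by norm_num), Set.ncard_eq_toFinset_card', Set.toFinset_ofPred]
  exact card_not_isType1Order_mul_two_pow_le (by omega)
end

section
/- Let s be a positive multiple of 4 and r ≥ 1, and let M be a 0/1 matrix with s rows and r columns in which every column contains exactly s/4 entries equal to 1. Then, with t = ⌊r·s / (8(r + s))⌋, there exist positions (i_1, j_1), (i_2, j_2), …, (i_t, j_t) with M_{i_k, j_k} = 1 for every k, and i_1 < i_2 < ⋯ < i_t and j_1 < j_2 < ⋯ < j_t. -/
/-!
Order the positions holding a `1` by `(i, j) < (i', j')` iff `i < i'` and `j < j'`. The elements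
of a given height form an antichain, while each of the `s + r - 1` antidiagonals `i - j = const`
is a chain, so every height level has fewer than `s + r` elements (Mirsky's argument). Hence the
`r * s / 4` ones occupy at least `r * s / (4 * (r + s))` height levels, and an element of maximal
height is the top of a chain with that many elements.
-/

open Order Finset

variable {α : Type*}

section Height

variable [PartialOrder α] [Fintype α]

theorem Order.height_ne_top_of_fintype (a : α) : height a ≠ ⊤ :=
  ((height_le fun p _ =>
    (Nat.cast_le.2 p.length_lt_card.le : (p.length : ℕ∞) ≤ Fintype.card α)).trans_lt
      (ENat.natCast_lt_top _)).ne

theorem Order.strictMono_toNat_height : StrictMono fun a : α => (height a).toNat := by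
  intro a b hab
  have h := height_strictMono hab (height_ne_top_of_fintype a).lt_top
  rwa [← ENat.natCast_toNat (height_ne_top_of_fintype a),
    ← ENat.natCast_toNat (height_ne_top_of_fintype b), Nat.cast_lt] at h

theorem exists_LTSeries_card_le_mul_card_of_isChain_fibers [Nonempty α] {ι : Type*} [Fintype ι]
    (f : α → ι) (hf : ∀ i, IsChain (· ≤ ·) (f ⁻¹' {i})) :
    ∃ p : LTSeries α, Fintype.card α ≤ (p.length + 1) * Fintype.card ι := by
  obtain ⟨a₀, -, hmax⟩ := univ.exists_max_image (fun a : α => (height a).toNat) univ_nonempty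
  obtain ⟨p, -, hp⟩ := exists_series_of_le_height a₀ (ENat.natCast_toNat_le_self (height a₀))
  refine ⟨p, ?_⟩
  let g : α → Fin ((height a₀).toNat + 1) × ι := fun a =>
    (⟨(height a).toNat, Nat.lt_succ_of_le (hmax a (mem_univ a))⟩, f a)
  have hg : Function.Injective g := by
    intro a b hab
    simp only [g, Prod.mk.injEq, Fin.mk.injEq] at hab
    by_contra hne
    rcases hf (f b) hab.2 rfl hne with h | h
    · exact (strictMono_toNat_height (h.lt_of_ne hne)).ne hab.1
    · exact (strictMono_toNat_height (h.lt_of_ne (Ne.symm hne))).ne' hab.1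
  simpa [hp] using Fintype.card_le_of_injective g hg

end Height

/-- `α × β` ordered by `p < q ↔ p.1 < q.1 ∧ p.2 < q.2`; the order on `α × β` itself has a
different `<` (componentwise `≤` and `≠`). -/
def StrictProd (α β : Type*) := α × β

namespace StrictProd

variable {β : Type*} [Preorder α] [Preorder β]

instance : PartialOrder (StrictProd α β) where
  le p q := p = q ∨ (p.1 < q.1 ∧ p.2 < q.2)
  lt p q := p.1 < q.1 ∧ p.2 < q.2
  le_refl p := Or.inl rfl
  le_trans p q u := by
    rintro (rfl | ⟨h₁, h₂⟩) (rfl | ⟨h₃, h₄⟩)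
    · exact Or.inl rfl
    · exact Or.inr ⟨h₃, h₄⟩
    · exact Or.inr ⟨h₁, h₂⟩
    · exact Or.inr ⟨h₁.trans h₃, h₂.trans h₄⟩
  le_antisymm p q := by
    rintro (rfl | ⟨h₁, -⟩) (h | ⟨h₃, -⟩)
    exacts [rfl, rfl, h.symm, (h₁.asymm h₃).elim]
  lt_iff_le_not_ge p q := by
    constructor
    · intro h
      refine ⟨Or.inr h, ?_⟩
      rintro (rfl | ⟨h₁, -⟩)
      exacts [h.1.false, h.1.asymm h₁]
    · rintro ⟨rfl | h, hn⟩
      exacts [(hn (Or.inl rfl)).elim, h]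

end StrictProd

theorem Finset.exists_strictMono_mem_card_le_mul {s r : ℕ} (S : Finset (Fin s × Fin r))
    (hS : S.Nonempty) :
    ∃ k, #S ≤ k * (s + r) ∧ ∃ pos : Fin k → Fin s × Fin r,
      (∀ i, pos i ∈ S) ∧ StrictMono (fun i => (pos i).1) ∧ StrictMono (fun i => (pos i).2) := by
  let T : Finset (StrictProd (Fin s) (Fin r)) := S
  have : Nonempty T := hS.to_subtype
  -- the antidiagonal `i - j = const` through `p`, shifted to be a natural number
  let diag : T → Fin (s + r) := fun p => ⟨p.1.1 + (r - 1 - p.1.2), by omega⟩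
  have hdiag : ∀ d, IsChain (· ≤ ·) (diag ⁻¹' {d}) := by
    intro d p hp q hq _
    have h : p.1.1.val + (r - 1 - p.1.2) = q.1.1 + (r - 1 - q.1.2) :=
      Fin.val_eq_of_eq (hp.trans hq.symm)
    rcases lt_trichotomy p.1.1 q.1.1 with hlt | heq | hgt
    · exact Or.inl (Or.inr ⟨hlt, by omega⟩)
    · exact Or.inl (Or.inl (Prod.ext heq (Fin.ext (by omega))))
    · exact Or.inr (Or.inr ⟨hgt, by omega⟩)
  obtain ⟨c, hc⟩ := exists_LTSeries_card_le_mul_card_of_isChain_fibers diag hdiag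
  exact ⟨c.length + 1, (Fintype.card_coe T).symm.trans_le (by simpa using hc),
    fun i => (c i).1, fun i => (c i).2,
    fun i j hij => (c.strictMono hij).1, fun i j hij => (c.strictMono hij).2⟩

theorem Finset.card_filter_prod_of_card_filter_eq {α β : Type*} [Fintype α] [Fintype β]
    (P : α → β → Prop) [∀ a b, Decidable (P a b)] {c : ℕ}
    (h : ∀ b, #(univ.filter fun a => P a b) = c) :
    #(univ.filter fun p : α × β => P p.1 p.2) = Fintype.card β * c := by
  rw [card_filter, Fintype.sum_prod_type, sum_comm]
  simp [h]

/-- Lemma 5.1: if every column of an `s × r` Boolean matrix `M` contains exactly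
`s/4` ones (`4 ∣ s`), then with `t = ⌊r·s / (8(r+s))⌋` there are `t` positions
with value `1` that are strictly increasing in both coordinates. -/
theorem stmt12 (s r : ℕ) (hs : 0 < s) (h4 : 4 ∣ s) (hr : 1 ≤ r)
    (M : Fin s → Fin r → Bool)
    (hM : ∀ j : Fin r, (Finset.univ.filter fun i => M i j = true).card = s / 4) :
    ∃ pos : Fin (r * s / (8 * (r + s))) → Fin s × Fin r,
      (∀ k, M (pos k).1 (pos k).2 = true) ∧
      StrictMono (fun k => (pos k).1) ∧
      StrictMono (fun k => (pos k).2) := by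
  set ones := univ.filter fun p : Fin s × Fin r => M p.1 p.2 = true
  have hcard : #ones = r * (s / 4) := by
    simpa using card_filter_prod_of_card_filter_eq (fun i j => M i j = true) hM
  have hne : ones.Nonempty := by
    rw [← card_pos, hcard]
    exact Nat.mul_pos hr (Nat.div_pos (Nat.le_of_dvd hs h4) four_pos)
  obtain ⟨k, hk, pos, hpos, hmono₁, hmono₂⟩ := ones.exists_strictMono_mem_card_le_mul hne
  have ht : r * s / (8 * (r + s)) ≤ k := by
    obtain ⟨m, rfl⟩ := h4
    rw [hcard, Nat.mul_div_cancel_left m four_pos] at hk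
    exact Nat.div_le_of_le_mul (by nlinarith)
  exact ⟨fun i => pos (Fin.castLE ht i), fun i => (mem_filter.1 (hpos _)).2,
    hmono₁.comp (Fin.strictMono_castLE ht), hmono₂.comp (Fin.strictMono_castLE ht)⟩
end

section
/- Let M be a Boolean matrix with a ≥ 1 rows and b ≥ 1 columns. Then the maximum length of a strictly increasing subsequence of σ(M) all of whose terms are positive equals W(M). Consequently, W(M) ≤ lis(σ(M)) ≤ W(M) + 1. -/
/-- `lisPos x` is the maximum cardinality of an increasing subsequence of `x`
all of whose terms are positive. -/
def lisPos {N : ℕ} (x : Fin N → ℕ) : ℕ :=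
  Finset.sup (Finset.univ.filter fun T : Finset (Fin N) =>
    (∀ i ∈ T, ∀ j ∈ T, i < j → x i < x j) ∧ ∀ i ∈ T, 0 < x i) Finset.card

/-- `sigmaM a b M` lists the entries of the `a × b` Boolean matrix `M` column by
column (each column from top to bottom); the entry in (`0`-indexed) row `i` and
column `j` contributes `b·i + j + 1` if it is `1` (the paper's `b(i−1)+j` in
`1`-indexed terms) and `0` otherwise.  The entry at stream position `k` sits in
row `k % a` and column `k / a`. -/
def sigmaM (a b : ℕ) (M : Fin a → Fin b → Bool) : Fin (a * b) → ℕ :=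
  fun k =>
    if h : (k : ℕ) % a < a ∧ (k : ℕ) / a < b then
      (if M ⟨(k : ℕ) % a, h.1⟩ ⟨(k : ℕ) / a, h.2⟩ then
        b * ((k : ℕ) % a) + (k : ℕ) / a + 1 else 0)
    else 0

/-- `Wchain M` is the maximum cardinality of a monotone chain of ones in `M`:
a set of positions with entry `1` that is totally ordered in the componentwise
order (equivalently, the maximum number of ones covered by a single down/right
lattice path). -/
def Wchain {a b : ℕ} (M : Fin a → Fin b → Bool) : ℕ :=
  Finset.sup (Finset.univ.filter fun P : Finset (Fin a × Fin b) =>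
    (∀ p ∈ P, M p.1 p.2 = true) ∧
    ∀ p ∈ P, ∀ q ∈ P, (p.1 ≤ q.1 ∧ p.2 ≤ q.2) ∨ (q.1 ≤ p.1 ∧ q.2 ≤ p.2))
    Finset.card

/-!
In `σ(M)` the entries are listed column by column, while the positive values `b·i + j + 1` grow
row by row. So two ones `p ≠ q` of `M` give an increasing pair of `σ(M)` exactly when `p` precedes
`q` both in the column-major and in the row-major lexicographic order, i.e. when `p < q`
componentwise. Hence the positive increasing subsequences of `σ(M)` are exactly the images of the
monotone chains of ones. Since `0` is the least value, an increasing subsequence contains at most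
one zero entry, which accounts for the `+ 1`.
-/

open Finset

theorem mul_add_lt_mul_add_iff_toLex_lt {n i j i' j' : ℕ} (hj : j < n) (hj' : j' < n) :
    n * i + j < n * i' + j' ↔ toLex (i, j) < toLex (i', j') := by
  simp only [Prod.Lex.toLex_lt_toLex]
  constructor
  · intro h
    rcases lt_trichotomy i i' with hi | rfl | hi
    · exact Or.inl hi
    · exact Or.inr ⟨rfl, by omega⟩
    · nlinarith
  · rintro (hi | ⟨rfl, hj⟩)
    · nlinarith
    · omega

theorem Prod.toLex_lt_and_toLex_swap_lt_iff {α β : Type*} [LinearOrder α] [LinearOrder β]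
    {p q : α × β} : toLex p < toLex q ∧ toLex p.swap < toLex q.swap ↔ p < q := by
  obtain ⟨p₁, p₂⟩ := p
  obtain ⟨q₁, q₂⟩ := q
  simp only [Prod.swap_prod_mk, Prod.Lex.toLex_lt_toLex, Prod.lt_iff]
  constructor
  · rintro ⟨h₁ | ⟨rfl, h₁⟩, h₂ | ⟨rfl, h₂⟩⟩ <;> simp_all [le_of_lt]
  · rintro (⟨h₁, h₂⟩ | ⟨h₁, h₂⟩)
    · exact ⟨Or.inl h₁, h₂.lt_or_eq.imp id fun h => ⟨h, h₁⟩⟩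
    · exact ⟨h₁.lt_or_eq.imp id fun h => ⟨h, h₂⟩, Or.inl h₂⟩

theorem Prod.swap_lex_imp_lex_iff_comparable {α β : Type*} [LinearOrder α] [LinearOrder β]
    (s : Set (α × β)) :
    (∀ p ∈ s, ∀ q ∈ s, toLex p.swap < toLex q.swap → toLex p < toLex q) ↔
      ∀ p ∈ s, ∀ q ∈ s, p ≤ q ∨ q ≤ p := by
  constructor
  · intro h p hp q hq
    rcases lt_trichotomy (toLex p.swap) (toLex q.swap) with hpq | hpq | hpq
    · exact Or.inl (toLex_lt_and_toLex_swap_lt_iff.1 ⟨h p hp q hq hpq, hpq⟩).le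
    · exact Or.inl (Prod.swap_injective (toLex.injective hpq)).le
    · exact Or.inr (toLex_lt_and_toLex_swap_lt_iff.1 ⟨h q hq p hp hpq, hpq⟩).le
  · intro h p hp q hq hpq
    rcases h p hp q hq with hle | hle
    · have hne : p ≠ q := by rintro rfl; exact hpq.false
      exact (toLex_lt_and_toLex_swap_lt_iff.2 (hle.lt_of_ne hne)).1
    · exact absurd hpq (Prod.Lex.toLex_mono (Prod.swap_le_swap.2 hle)).not_gt

/-- The position in `σ(M)` of the entry `(i, j)` of `M`. -/
def colMajor (a b : ℕ) : Fin a × Fin b ≃ Fin (a * b) :=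
  (Equiv.prodComm _ _).trans (finProdFinEquiv.trans (finCongr (Nat.mul_comm b a)))

theorem colMajor_val {a b : ℕ} (p : Fin a × Fin b) : (colMajor a b p : ℕ) = a * p.2 + p.1 := by
  simp [colMajor, finProdFinEquiv, add_comm]

theorem colMajor_lt_colMajor_iff {a b : ℕ} {p q : Fin a × Fin b} :
    colMajor a b p < colMajor a b q ↔ toLex p.swap < toLex q.swap := by
  rw [Fin.lt_def, colMajor_val, colMajor_val, mul_add_lt_mul_add_iff_toLex_lt p.1.2 q.1.2]
  simp only [Prod.Lex.toLex_lt_toLex, Prod.fst_swap, Prod.snd_swap, Fin.val_fin_lt, Fin.val_inj]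

theorem sigmaM_colMajor {a b : ℕ} (M : Fin a → Fin b → Bool) (p : Fin a × Fin b) :
    sigmaM a b M (colMajor a b p) = if M p.1 p.2 then b * p.1 + p.2 + 1 else 0 := by
  have hmod : (colMajor a b p : ℕ) % a = p.1 := by
    rw [colMajor_val, Nat.mul_add_mod, Nat.mod_eq_of_lt p.1.2]
  have hdiv : (colMajor a b p : ℕ) / a = p.2 := by
    rw [colMajor_val, Nat.mul_add_div p.1.pos, Nat.div_eq_of_lt p.1.2, add_zero]
  simp [sigmaM, hmod, hdiv]

theorem Finset.sup_card_filter_univ_congr_equiv {α β : Type*} [Fintype α] [Fintype β]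
    (e : α ≃ β) {p : Finset α → Prop} {q : Finset β → Prop} [DecidablePred p]
    [DecidablePred q] (h : ∀ s, q (s.map e.toEmbedding) ↔ p s) :
    (univ.filter q).sup card = (univ.filter p).sup card := by
  rw [← map_univ_equiv e.finsetCongr, filter_map, sup_map]
  refine sup_congr (filter_congr fun s _ => ?_) fun s _ => ?_
  · simpa using h s
  · simp

theorem lisPos_sigmaM {a b : ℕ} (M : Fin a → Fin b → Bool) :
    lisPos (sigmaM a b M) = Wchain M := by
  have value_lt_iff (p q : Fin a × Fin b) :
      b * p.1 + p.2 + 1 < b * q.1 + q.2 + 1 ↔ toLex p < toLex q := by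
    rw [add_lt_add_iff_right, mul_add_lt_mul_add_iff_toLex_lt p.2.2 q.2.2]
    simp only [Prod.Lex.toLex_lt_toLex, Fin.val_fin_lt, Fin.val_inj]
  refine sup_card_filter_univ_congr_equiv (colMajor a b) fun P => ?_
  simp only [forall_mem_map, Equiv.coe_toEmbedding, sigmaM_colMajor, colMajor_lt_colMajor_iff,
    Nat.pos_iff_ne_zero, ne_eq, ite_eq_right_iff, Nat.add_one_ne_zero, imp_false, not_not]
  refine and_comm.trans (and_congr_right fun hones => ?_)
  refine Iff.trans ?_ (Prod.swap_lex_imp_lex_iff_comparable (P : Set (Fin a × Fin b)))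
  refine forall₂_congr fun p hp => forall₂_congr fun q hq => imp_congr_right fun _ => ?_
  simp only [hones p hp, hones q hq, if_true, value_lt_iff]

theorem lisPos_le_lis {N : ℕ} (x : Fin N → ℕ) : lisPos x ≤ lis x :=
  sup_mono fun _ hT => mem_filter.2 ⟨mem_univ _, (mem_filter.1 hT).2.1⟩

theorem lis_le_lisPos_add_one {N : ℕ} (x : Fin N → ℕ) : lis x ≤ lisPos x + 1 := by
  refine Finset.sup_le fun T hT => ?_
  have hinc := (mem_filter.1 hT).2
  have hpos : (T.filter (0 < x ·)).card ≤ lisPos x := by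
    refine le_sup (mem_filter.2 ⟨mem_univ _, fun i hi j hj => ?_, fun i hi => (mem_filter.1 hi).2⟩)
    exact hinc i (mem_filter.1 hi).1 j (mem_filter.1 hj).1
  have hzero : (T.filter (¬ 0 < x ·)).card ≤ 1 := by
    refine card_le_one.2 fun i hi j hj => ?_
    simp only [mem_filter, not_lt, nonpos_iff_eq_zero] at hi hj
    by_contra hij
    rcases lt_or_gt_of_ne hij with h | h
    · exact (hinc i hi.1 j hj.1 h).ne (hi.2.trans hj.2.symm)
    · exact (hinc j hj.1 i hi.1 h).ne (hj.2.trans hi.2.symm)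
  have hsplit := card_filter_add_card_filter_not (s := T) (0 < x ·)
  omega

theorem stmt13_general (a b : ℕ) (M : Fin a → Fin b → Bool) :
    lisPos (sigmaM a b M) = Wchain M ∧
    Wchain M ≤ lis (sigmaM a b M) ∧ lis (sigmaM a b M) ≤ Wchain M + 1 := by
  rw [← lisPos_sigmaM M]
  exact ⟨rfl, lisPos_le_lis _, lis_le_lisPos_add_one _⟩

/-- Claim 5.2 (precise two-sided form): for an `a × b` Boolean matrix `M`, the
maximum length of a strictly increasing subsequence of `σ(M)` with all terms
positive equals `W(M)`, and consequently `W(M) ≤ lis(σ(M)) ≤ W(M) + 1`. -/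
theorem stmt13 (a b : ℕ) (ha : 1 ≤ a) (hb : 1 ≤ b) (M : Fin a → Fin b → Bool) :
    lisPos (sigmaM a b M) = Wchain M ∧
    Wchain M ≤ lis (sigmaM a b M) ∧ lis (sigmaM a b M) ≤ Wchain M + 1 :=
  stmt13_general a b M
end

section
/- Let p, q ≥ 1 and let u, v ∈ ({0,1}^p)^q with u = v. Then W(M(u,v)) ≤ 4p + 6q + min(p, q). -/
/-- The length-9 patterns `e(1) = (1,1,0,0,0,0,1,1,0)` and
`e(0) = (0,0,1,1,1,1,0,0,0)` (rows `0`-indexed). -/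
def epat (x : Bool) (r : Fin 9) : Bool :=
  if x then decide ((r : ℕ) = 0 ∨ (r : ℕ) = 1 ∨ (r : ℕ) = 6 ∨ (r : ℕ) = 7)
  else decide (2 ≤ (r : ℕ) ∧ (r : ℕ) ≤ 5)

/-- `ebar p w` is the concatenation `e(w_1) e(w_2) ⋯ e(w_p) ∈ {0,1}^{9p}`. -/
def ebar (p : ℕ) (w : Fin p → Bool) : Fin (9 * p) → Bool :=
  fun r => epat (w ⟨(r : ℕ) / 9, by have := r.isLt; omega⟩) ⟨(r : ℕ) % 9, by omega⟩

/-- The `9p × 8q` Boolean matrix `M(u,v)`: for `1 ≤ i ≤ q` (so `0`-indexed block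
`i−1 = c/8`), column `8i−4` (`0`-indexed `c` with `c % 8 = 3`) is `ē(u^{(i)})`,
column `8i−3` (`0`-indexed `c % 8 = 4`) is `ē(v^{(i)})`, and every other column
has a `1` exactly in the rows whose `1`-indexed number is a multiple of `9`. -/
def Mmat (p q : ℕ) (u v : Fin q → Fin p → Bool) : Fin (9 * p) → Fin (8 * q) → Bool :=
  fun r c =>
    if (c : ℕ) % 8 = 3 then ebar p (u ⟨(c : ℕ) / 8, by have := c.isLt; omega⟩) r
    else if (c : ℕ) % 8 = 4 then ebar p (v ⟨(c : ℕ) / 8, by have := c.isLt; omega⟩) r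
    else decide ((r : ℕ) % 9 = 8)

theorem Finset.card_le_of_isChain_of_strictMonoOn {α : Type*} [PartialOrder α] {P : Finset α}
    (hP : IsChain (· ≤ ·) (P : Set α)) {F : α → ℕ} (hF : StrictMonoOn F P) {N : ℕ}
    (hN : ∀ z ∈ P, F z < N) : P.card ≤ N := by
  have hinj : Set.InjOn F P := by
    intro z hz w hw hzw
    by_contra hne
    rcases hP hz hw hne with hle | hle
    · exact (hF hz hw (hle.lt_of_ne hne)).ne hzw
    · exact (hF hw hz (hle.lt_of_ne (Ne.symm hne))).ne hzw.symm
  simpa using Finset.card_le_card_of_injOn F (fun z hz => Finset.mem_range.2 (hN z hz)) hinj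

theorem Wchain_le_of_strictMonoOn {a b : ℕ} (M : Fin a → Fin b → Bool) (F : Fin a × Fin b → ℕ)
    (hF : StrictMonoOn F {z | M z.1 z.2 = true}) (N : ℕ) (hN : ∀ z, M z.1 z.2 = true → F z < N) :
    Wchain M ≤ N := by
  refine Finset.sup_le fun P hP => ?_
  obtain ⟨hones, hchain⟩ := (Finset.mem_filter.1 hP).2
  exact Finset.card_le_of_isChain_of_strictMonoOn (fun z hz w hw _ => hchain z hz w hw)
    (hF.mono fun z hz => hones z hz) fun z hz => hN z (hones z hz)

/-- A `9 × 8` block of `M(u,u)` whose two pattern columns both carry `e(x)`. -/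
def blockPattern (x : Bool) (ρ : Fin 9) (κ : Fin 8) : Bool :=
  if (κ : ℕ) = 3 ∨ (κ : ℕ) = 4 then epat x ρ else decide ((ρ : ℕ) = 8)

theorem Mmat_self_apply {p q : ℕ} (u : Fin q → Fin p → Bool) (r : Fin (9 * p)) (c : Fin (8 * q)) :
    Mmat p q u u r c = blockPattern (u ⟨c / 8, by omega⟩ ⟨r / 9, by omega⟩)
      ⟨r % 9, by omega⟩ ⟨c % 8, by omega⟩ := by
  unfold Mmat ebar blockPattern
  split_ifs <;> simp_all

/-- The four clauses compare two ones in the same block, in the same row of blocks, in the same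
column of blocks, and in neither. -/
def IsBlockPotential (G H : ℕ) (φ : Fin 9 → Fin 8 → ℕ) : Prop :=
  ∀ x y : Bool, ∀ ρ ρ' : Fin 9, ∀ κ κ' : Fin 8,
    blockPattern x ρ κ = true → blockPattern y ρ' κ' = true →
    (x = y → ρ ≤ ρ' → κ ≤ κ' → (ρ ≠ ρ' ∨ κ ≠ κ') → φ ρ κ < φ ρ' κ') ∧
    (ρ ≤ ρ' → φ ρ κ < H + φ ρ' κ') ∧ (κ ≤ κ' → φ ρ κ < G + φ ρ' κ') ∧
    φ ρ κ < G + H + φ ρ' κ'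

def blockPotential {p q : ℕ} (G H : ℕ) (φ : Fin 9 → Fin 8 → ℕ)
    (z : Fin (9 * p) × Fin (8 * q)) : ℕ :=
  G * ((z.1 : ℕ) / 9) + H * ((z.2 : ℕ) / 8) + φ ⟨z.1 % 9, by omega⟩ ⟨z.2 % 8, by omega⟩

theorem Nat.mul_add_le_mul_of_lt (G : ℕ) {a b : ℕ} (h : a < b) : G * a + G ≤ G * b := by
  simpa [Nat.mul_succ] using Nat.mul_le_mul_left G h

theorem blockPotential_strictMonoOn {p q G H : ℕ} {φ : Fin 9 → Fin 8 → ℕ}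
    (hφ : IsBlockPotential G H φ) (u : Fin q → Fin p → Bool) :
    StrictMonoOn (blockPotential G H φ) {z | Mmat p q u u z.1 z.2 = true} := by
  rintro ⟨r, c⟩ hz ⟨r', c'⟩ hw hlt
  simp only [Set.mem_ofPred_eq, Mmat_self_apply] at hz hw
  obtain ⟨hr, hc⟩ : (r : ℕ) ≤ r' ∧ (c : ℕ) ≤ c' := hlt.le
  have hne : (r : ℕ) ≠ r' ∨ (c : ℕ) ≠ c' := by
    by_contra! h
    exact hlt.ne (Prod.ext (Fin.ext h.1) (Fin.ext h.2))
  obtain ⟨hsame, hrow, hcol, hboth⟩ := hφ _ _ _ _ _ _ hz hw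
  simp only [Fin.mk_le_mk, ne_eq, Fin.mk.injEq] at hsame hrow hcol
  simp only [blockPotential]
  rcases (Nat.div_le_div_right (c := 9) hr).eq_or_lt with hb | hb <;>
    rcases (Nat.div_le_div_right (c := 8) hc).eq_or_lt with hj | hj
  · have hx : u ⟨c / 8, by omega⟩ ⟨r / 9, by omega⟩ = u ⟨c' / 8, by omega⟩ ⟨r' / 9, by omega⟩ := by
      simp only [hb, hj]
    have := hsame hx (by omega) (by omega) (by omega)
    rw [hb, hj]
    omega
  · have := hrow (by omega)
    have := Nat.mul_add_le_mul_of_lt H hj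
    rw [hb]
    omega
  · have := hcol (by omega)
    have := Nat.mul_add_le_mul_of_lt G hb
    rw [hj]
    omega
  · have := Nat.mul_add_le_mul_of_lt H hj
    have := Nat.mul_add_le_mul_of_lt G hb
    omega

theorem blockPotential_le {p q G H m : ℕ} {φ : Fin 9 → Fin 8 → ℕ} (hm : ∀ ρ κ, φ ρ κ ≤ m)
    (z : Fin (9 * p) × Fin (8 * q)) : blockPotential G H φ z ≤ G * (p - 1) + H * (q - 1) + m := by
  have := Nat.mul_le_mul_left G (show (z.1 : ℕ) / 9 ≤ p - 1 by omega)
  have := Nat.mul_le_mul_left H (show (z.2 : ℕ) / 8 ≤ q - 1 by omega)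
  have := hm ⟨z.1 % 9, by omega⟩ ⟨z.2 % 8, by omega⟩
  simp only [blockPotential]
  omega

theorem Wchain_Mmat_self_le {p q G H m : ℕ} {φ : Fin 9 → Fin 8 → ℕ}
    (hφ : IsBlockPotential G H φ) (hm : ∀ ρ κ, φ ρ κ ≤ m) (u : Fin q → Fin p → Bool) :
    Wchain (Mmat p q u u) ≤ G * (p - 1) + H * (q - 1) + m + 1 :=
  Wchain_le_of_strictMonoOn _ _ (blockPotential_strictMonoOn hφ u) _
    fun z _ => Nat.lt_succ_of_le (blockPotential_le hm z)

def blockWeights₅₆ (ρ : Fin 9) (κ : Fin 8) : ℕ :=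
  ![0, 1, 0, 1, 2, 3, 2, 3, 4] ρ + ![0, 1, 2, 2, 3, 3, 4, 5] κ

def blockWeights₄₇ (ρ : Fin 9) (κ : Fin 8) : ℕ :=
  ![0, 1, 0, 1, 2, 3, 2, 3, 3] ρ + ![0, 1, 2, 2, 3, 4, 5, 6] κ

set_option synthInstance.maxSize 100000 in
theorem isBlockPotential_blockWeights₅₆ : IsBlockPotential 5 6 blockWeights₅₆ := by
  unfold IsBlockPotential; decide

set_option synthInstance.maxSize 100000 in
theorem isBlockPotential_blockWeights₄₇ : IsBlockPotential 4 7 blockWeights₄₇ := by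
  unfold IsBlockPotential; decide

theorem blockWeights₅₆_le (ρ : Fin 9) (κ : Fin 8) : blockWeights₅₆ ρ κ ≤ 9 := by
  revert ρ κ; decide

theorem blockWeights₄₇_le (ρ : Fin 9) (κ : Fin 8) : blockWeights₄₇ ρ κ ≤ 9 := by
  revert ρ κ; decide

/-- Claim 5.3: if `u = v` then `W(M(u,v)) ≤ 4p + 6q + min(p,q)`. -/
theorem stmt14 (p q : ℕ) (hp : 1 ≤ p) (hq : 1 ≤ q)
    (u v : Fin q → Fin p → Bool) (huv : u = v) :
    Wchain (Mmat p q u v) ≤ 4 * p + 6 * q + min p q := by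
  subst huv
  have h₅₆ := Wchain_Mmat_self_le isBlockPotential_blockWeights₅₆ blockWeights₅₆_le u
  have h₄₇ := Wchain_Mmat_self_le isBlockPotential_blockWeights₄₇ blockWeights₄₇_le u
  omega
end
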